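/- arXiv:2006.15747 — 5 statements merged into one kernel-verified Lean document; each statement's English description precedes it below -/
import Mathlib

section
/- Under 1-0 utilities (every u_{ij} ∈ {0,1}), the HZ rule is equivalent to the leximin rule applied to the set of balanced assignments: for every HZ solution x and every balanced fractional assignment y that is leximin-optimal among balanced fractional assignments, every agent i receives the same utility in x as in y, i.e. Σ_j u_{ij} x_{ij} = Σ_j u_{ij} y_{ij} for all i. -/
open Finset

/-- A fractional assignment: entries in `[0,1]`, each column sums to 1. -/
def IsFracAssign (n : ℕ) (x : Fin n → Fin n → ℝ) : Prop :=
  (∀ i j, 0 ≤ x i j ∧ x i j ≤ 1) ∧ ∀ j, ∑ i, x i j = 1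

/-- A fractional assignment is balanced if each row sums to 1. -/
def IsBalanced (n : ℕ) (x : Fin n → Fin n → ℝ) : Prop :=
  ∀ i, ∑ j, x i j = 1

/-- An allocation: a vector in `[0,1]^n`. -/
def IsAlloc (n : ℕ) (y : Fin n → ℝ) : Prop :=
  ∀ j, 0 ≤ y j ∧ y j ≤ 1

/-- A balanced allocation: an allocation whose entries sum to 1. -/
def IsBalancedAlloc (n : ℕ) (y : Fin n → ℝ) : Prop :=
  IsAlloc n y ∧ ∑ j, y j = 1

/-- Agent `i`'s utility for the allocation `y` under utility matrix `u`. -/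
def util (n : ℕ) (u : Fin n → Fin n → ℝ) (i : Fin n) (y : Fin n → ℝ) : ℝ :=
  ∑ j, u i j * y j

/-- `x` is an HZ solution supported by the price vector `p`:
`x` is a balanced fractional assignment and, for every agent `i`,
(a) the row `x i` maximizes `i`'s utility over all balanced allocations within budget 1, and
(b) `x i` is a cheapest balanced allocation achieving at least that utility. -/
def IsHZWithPrices (n : ℕ) (u x : Fin n → Fin n → ℝ) (p : Fin n → ℝ) : Prop :=
  IsFracAssign n x ∧ IsBalanced n x ∧ (∀ j, 0 ≤ p j) ∧
  ∀ i : Fin n,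
    (∑ j, p j * x i j ≤ 1) ∧
    (∀ y, IsBalancedAlloc n y → ∑ j, p j * y j ≤ 1 → util n u i y ≤ util n u i (x i)) ∧
    (∀ y, IsBalancedAlloc n y → util n u i (x i) ≤ util n u i y →
      ∑ j, p j * x i j ≤ ∑ j, p j * y j)

/-- `x` is an HZ solution: some nonnegative price vector supports it. -/
def IsHZ (n : ℕ) (u x : Fin n → Fin n → ℝ) : Prop :=
  ∃ p : Fin n → ℝ, IsHZWithPrices n u x p

/-- The vector `v` sorted in nondecreasing order. -/
noncomputable def sortedVec (n : ℕ) (v : Fin n → ℝ) : Fin n → ℝ :=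
  v ∘ Tuple.sort v

noncomputable def psum (n : ℕ) (v : Fin n → ℝ) (k : ℕ) : ℝ :=
  ∑ i : Fin n, if (i : ℕ) < k then sortedVec n v i else 0

lemma psum_eq_sum_filter (n : ℕ) (v : Fin n → ℝ) (k : ℕ) :
    psum n v k = ∑ i ∈ univ.filter (fun i : Fin n => (i : ℕ) < k), sortedVec n v i := by
  rw [psum, sum_filter]

lemma sortedVec_monotone (n : ℕ) (v : Fin n → ℝ) : Monotone (sortedVec n v) :=
  Tuple.monotone_sort v

lemma psum_succ (n : ℕ) (v : Fin n → ℝ) (k : ℕ) (hk : k < n) :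
    psum n v (k + 1) = psum n v k + sortedVec n v ⟨k, hk⟩ := by
  have h : ∀ i : Fin n, (if (i : ℕ) < k + 1 then sortedVec n v i else 0)
      = (if (i : ℕ) < k then sortedVec n v i else 0)
        + (if i = ⟨k, hk⟩ then sortedVec n v i else 0) := by
    intro i
    rcases lt_trichotomy (i : ℕ) k with h | h | h
    · rw [if_pos (by omega), if_pos h, if_neg (by simp [Fin.ext_iff]; omega), add_zero]
    · rw [if_pos (by omega), if_neg (by omega), if_pos (by simp [Fin.ext_iff]; omega), zero_add]
    · rw [if_neg (by omega), if_neg (by omega), if_neg (by simp [Fin.ext_iff]; omega), add_zero]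
  rw [psum, psum]
  simp_rw [h]
  rw [Finset.sum_add_distrib, Finset.sum_ite_eq' Finset.univ (⟨k, hk⟩ : Fin n) (sortedVec n v)]
  simp

lemma sum_sorted_prefix_le (n : ℕ) (v : Fin n → ℝ) (S : Finset (Fin n)) :
    psum n v S.card ≤ ∑ i ∈ S, v i := by
  classical
  set σ := Tuple.sort v with hσ
  set k := S.card with hkdef
  have hk : k ≤ n := by
    simpa using (Finset.card_le_univ S)
  set T : Finset (Fin n) := S.image σ.symm with hT
  have hTcard : T.card = k := Finset.card_image_of_injective _ σ.symm.injective
  have hsumT : ∑ i ∈ T, sortedVec n v i = ∑ i ∈ S, v i := by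
    rw [hT, Finset.sum_image (fun a _ b _ h => σ.symm.injective h)]
    refine Finset.sum_congr rfl fun i _ => ?_
    simp [sortedVec, hσ]
  rw [← hsumT]
  set e := T.orderEmbOfFin hTcard with he
  have hkey : ∀ m : ℕ, ∀ hm : m < k, m ≤ ((e ⟨m, hm⟩ : Fin n) : ℕ) := by
    intro m
    induction m with
    | zero => intro _; exact Nat.zero_le _
    | succ m ih =>
      intro hm
      have hm' : m < k := by omega
      have h1 : (⟨m, hm'⟩ : Fin k) < ⟨m + 1, hm⟩ := by simp [Fin.lt_def]
      have h2 := e.strictMono h1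
      have h3 := ih hm'
      rw [Fin.lt_def] at h2
      omega
  have himg : T = Finset.univ.image e := by
    ext j
    constructor
    · intro hj
      have : j ∈ Set.range e := by rw [Finset.range_orderEmbOfFin]; exact hj
      obtain ⟨i, hi⟩ := this
      exact Finset.mem_image.2 ⟨i, Finset.mem_univ _, hi⟩
    · intro hj
      obtain ⟨i, _, rfl⟩ := Finset.mem_image.1 hj
      exact Finset.orderEmbOfFin_mem T hTcard i
  have hsum2 : ∑ i ∈ T, sortedVec n v i = ∑ i : Fin k, sortedVec n v (e i) := by
    rw [himg, Finset.sum_image (fun a _ b _ h => e.injective h)]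
  have hfilter : Finset.univ.filter (fun i : Fin n => (i : ℕ) < k)
      = Finset.univ.image (Fin.castLE hk) := by
    ext j
    constructor
    · intro hj
      have hj' : (j : ℕ) < k := (Finset.mem_filter.1 hj).2
      exact Finset.mem_image.2 ⟨⟨(j : ℕ), hj'⟩, Finset.mem_univ _, by ext; rfl⟩
    · intro hj
      obtain ⟨i, _, rfl⟩ := Finset.mem_image.1 hj
      exact Finset.mem_filter.2 ⟨Finset.mem_univ _, i.isLt⟩
  have hsum1 : psum n v k = ∑ i : Fin k, sortedVec n v (Fin.castLE hk i) := by
    rw [psum_eq_sum_filter, hfilter,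
      Finset.sum_image (fun a _ b _ h => (Fin.castLE_injective hk) h)]
  rw [hsum1, hsum2]
  apply Finset.sum_le_sum
  intro i _
  apply sortedVec_monotone
  rw [Fin.le_def]
  exact hkey i i.isLt

lemma filter_perm_card (n : ℕ) (v : Fin n → ℝ) (σ : Equiv.Perm (Fin n))
    (Q : ℝ → Prop) [DecidablePred Q] :
    (Finset.univ.filter fun i => Q (v (σ i))).card
      = (Finset.univ.filter fun i => Q (v i)).card := by
  apply Finset.card_nbij' (fun i => σ i) (fun j => σ.symm j) <;> simp [Set.MapsTo, Set.LeftInvOn, Set.RightInvOn]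

lemma filter_perm_sum (n : ℕ) (v : Fin n → ℝ) (σ : Equiv.Perm (Fin n))
    (Q : ℝ → Prop) [DecidablePred Q] :
    ∑ i ∈ Finset.univ.filter (fun i => Q (v (σ i))), v (σ i)
      = ∑ i ∈ Finset.univ.filter (fun i => Q (v i)), v i := by
  apply Finset.sum_nbij' (fun i => σ i) (fun j => σ.symm j) <;> simp

lemma lex_le_of_psum_le (n : ℕ) (v v' : Fin n → ℝ)
    (h : ∀ k, psum n v' k ≤ psum n v k) :
    toLex (sortedVec n v') ≤ toLex (sortedVec n v) := by
  have tri : IsTrichotomous (Fin n → ℝ) (Pi.Lex (· < ·) (@fun _ => (· < ·))) :=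
    Pi.isTrichotomous_lex _ _ IsWellFounded.wf
  rcases trichotomous_of (r := Pi.Lex (· < ·) (@fun _ => (· < ·))) (sortedVec n v') (sortedVec n v) with h1 | h1 | h1
  · exact le_of_lt h1
  · exact le_of_eq (congrArg toLex h1)
  exfalso
  obtain ⟨i, hbefore, hlt⟩ := h1
  have h1 : psum n v (i + 1) < psum n v' (i + 1) := by
    rw [psum_succ n v i i.isLt, psum_succ n v' i i.isLt]
    have heq : psum n v i = psum n v' i := by
      rw [psum, psum]
      refine Finset.sum_congr rfl fun j _ => ?_
      by_cases hj : (j : ℕ) < (i : ℕ)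
      · rw [if_pos hj, if_pos hj, hbefore j (Fin.lt_def.mpr hj)]
      · rw [if_neg hj, if_neg hj]
    rw [heq]
    have : sortedVec n v ⟨(i : ℕ), i.isLt⟩ < sortedVec n v' ⟨(i : ℕ), i.isLt⟩ := by
      simpa using hlt
    linarith
  exact absurd (h (i + 1)) (not_le.2 h1)

lemma exists_min_subset {α : Type*} [DecidableEq α] (G : Finset α) (c : α → ℝ) :
    ∀ m : ℕ, m ≤ G.card → ∃ M ⊆ G, M.card = m ∧ ∀ i ∈ M, ∀ j ∈ G \ M, c i ≤ c j := by
  intro m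
  induction m with
  | zero => intro _; exact ⟨∅, Finset.empty_subset _, Finset.card_empty, by simp⟩
  | succ m ih =>
    intro hm
    obtain ⟨M, hMG, hMcard, hMmin⟩ := ih (by omega)
    have hne : (G \ M).Nonempty := by
      rw [← Finset.card_pos, Finset.card_sdiff_of_subset hMG]; omega
    obtain ⟨j0, hj0mem, hj0min⟩ := Finset.exists_min_image (G \ M) c hne
    have hj0G : j0 ∈ G := (Finset.mem_sdiff.1 hj0mem).1
    have hj0M : j0 ∉ M := (Finset.mem_sdiff.1 hj0mem).2
    refine ⟨insert j0 M, Finset.insert_subset hj0G hMG, ?_, ?_⟩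
    · rw [Finset.card_insert_of_notMem hj0M, hMcard]
    · intro i hi j hj
      have hjG : j ∈ G \ M := by
        rw [Finset.mem_sdiff] at hj ⊢
        exact ⟨hj.1, fun hjM => hj.2 (Finset.mem_insert_of_mem hjM)⟩
      rcases Finset.mem_insert.1 hi with rfl | hiM
      · exact hj0min j hjG
      · exact hMmin i hiM j hjG

lemma exists_avg_subset {α : Type*} [DecidableEq α] (G : Finset α) (c : α → ℝ)
    (m : ℕ) (hm : m ≤ G.card) :
    ∃ M ⊆ G, M.card = m ∧ (G.card : ℝ) * ∑ i ∈ M, c i ≤ (m : ℝ) * ∑ i ∈ G, c i := by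
  obtain ⟨M, hMG, hMcard, hMmin⟩ := exists_min_subset G c m hm
  refine ⟨M, hMG, hMcard, ?_⟩
  have hsplit : ∑ i ∈ G, c i = ∑ i ∈ M, c i + ∑ i ∈ G \ M, c i := by
    rw [← Finset.sum_sdiff hMG]; ring
  have hkey : (((G \ M).card : ℝ)) * ∑ i ∈ M, c i ≤ (M.card : ℝ) * ∑ j ∈ G \ M, c j := by
    have h1 : ∑ i ∈ M, ∑ _j ∈ G \ M, c i ≤ ∑ _i ∈ M, ∑ j ∈ G \ M, c j :=
      Finset.sum_le_sum fun i hi => Finset.sum_le_sum fun j hj => hMmin i hi j hj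
    calc (((G \ M).card : ℝ)) * ∑ i ∈ M, c i = ∑ i ∈ M, ∑ _j ∈ G \ M, c i := by
          rw [Finset.mul_sum]
          exact Finset.sum_congr rfl fun i _ => by
            rw [Finset.sum_const, nsmul_eq_mul]
      _ ≤ ∑ _i ∈ M, ∑ j ∈ G \ M, c j := h1
      _ = (M.card : ℝ) * ∑ j ∈ G \ M, c j := by rw [Finset.sum_const, nsmul_eq_mul]
  have hcard : ((G \ M).card : ℝ) = (G.card : ℝ) - (m : ℝ) := by
    rw [Finset.card_sdiff_of_subset hMG, hMcard]
    push_cast [Nat.cast_sub hm]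
    ring
  rw [hcard, hMcard] at hkey
  rw [hsplit]
  nlinarith [hkey]

lemma one_point_alloc (n : ℕ) (j1 : Fin n) :
    IsBalancedAlloc n (fun t => if t = j1 then (1 : ℝ) else 0) ∧
    ∀ g : Fin n → ℝ, (∑ t, g t * (if t = j1 then (1 : ℝ) else 0)) = g j1 := by
  refine ⟨⟨fun t => by dsimp only; split <;> norm_num, by simp⟩, fun g => by simp⟩

lemma two_point_alloc (n : ℕ) (j1 j0 : Fin n) (hne : j1 ≠ j0) (α : ℝ)
    (h0 : 0 ≤ α) (h1 : α ≤ 1) :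
    IsBalancedAlloc n
      (fun t => α * (if t = j1 then 1 else 0) + (1 - α) * (if t = j0 then 1 else 0)) ∧
    ∀ g : Fin n → ℝ,
      (∑ t, g t * (α * (if t = j1 then 1 else 0) + (1 - α) * (if t = j0 then 1 else 0)))
        = α * g j1 + (1 - α) * g j0 := by
  refine ⟨⟨fun t => ?_, ?_⟩, fun g => ?_⟩
  · dsimp only
    rcases eq_or_ne t j1 with rfl | h1'
    · rw [if_pos rfl, if_neg hne]
      constructor <;> linarith
    · rw [if_neg h1']
      rcases eq_or_ne t j0 with rfl | h0'
      · rw [if_pos rfl]; constructor <;> linarith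
      · rw [if_neg h0']; norm_num
  · rw [Finset.sum_add_distrib, ← Finset.mul_sum, ← Finset.mul_sum]
    simp
  · have hpt : ∀ t : Fin n,
        g t * (α * (if t = j1 then 1 else 0) + (1 - α) * (if t = j0 then 1 else 0))
          = α * (if t = j1 then g t else 0) + (1 - α) * (if t = j0 then g t else 0) := by
      intro t; split_ifs <;> ring
    rw [Finset.sum_congr rfl fun t _ => hpt t, Finset.sum_add_distrib,
      ← Finset.mul_sum, ← Finset.mul_sum]
    simp

lemma move_alloc (n : ℕ) (w : Fin n → ℝ) (hw : IsBalancedAlloc n w) (j j' : Fin n)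
    (hne : j ≠ j') :
    IsBalancedAlloc n
      (fun t => w t + w j * ((if t = j' then 1 else 0) - (if t = j then 1 else 0))) ∧
    ∀ g : Fin n → ℝ,
      (∑ t, g t * (w t + w j * ((if t = j' then 1 else 0) - (if t = j then 1 else 0))))
        = (∑ t, g t * w t) + w j * (g j' - g j) := by
  obtain ⟨hw01, hwsum⟩ := hw
  have hpair : w j + w j' ≤ 1 := by
    have h1 : ∑ t ∈ ({j, j'} : Finset (Fin n)), w t ≤ ∑ t, w t := by
      apply Finset.sum_le_sum_of_subset_of_nonneg (Finset.subset_univ _)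
      intro t _ _; exact (hw01 t).1
    rw [Finset.sum_pair hne, hwsum] at h1
    exact h1
  refine ⟨⟨fun t => ?_, ?_⟩, fun g => ?_⟩
  · dsimp only
    rcases eq_or_ne t j with rfl | htj
    · rw [if_pos rfl, if_neg hne]
      have := (hw01 t).1; have := (hw01 t).2
      constructor <;> linarith
    · rw [if_neg htj]
      rcases eq_or_ne t j' with rfl | htj'
      · rw [if_pos rfl]
        have := (hw01 t).1; have := (hw01 j).1
        constructor <;> linarith
      · rw [if_neg htj']
        have := (hw01 t).1; have := (hw01 t).2
        constructor <;> linarith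
  · rw [Finset.sum_add_distrib, ← Finset.mul_sum, Finset.sum_sub_distrib, hwsum]
    simp
  · have hpt : ∀ t : Fin n,
        g t * (w t + w j * ((if t = j' then 1 else 0) - (if t = j then 1 else 0)))
          = g t * w t + w j * ((if t = j' then g t else 0) - (if t = j then g t else 0)) := by
      intro t; split_ifs <;> ring
    rw [Finset.sum_congr rfl fun t _ => hpt t, Finset.sum_add_distrib,
      ← Finset.mul_sum, Finset.sum_sub_distrib]
    simp

lemma card_filter_lt (n k : ℕ) (hk : k ≤ n) :
    (Finset.univ.filter fun i : Fin n => (i : ℕ) < k).card = k := by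
  have hfilter : Finset.univ.filter (fun i : Fin n => (i : ℕ) < k)
      = Finset.univ.image (Fin.castLE hk) := by
    ext j
    constructor
    · intro hj
      have hj' : (j : ℕ) < k := (Finset.mem_filter.1 hj).2
      exact Finset.mem_image.2 ⟨⟨(j : ℕ), hj'⟩, Finset.mem_univ _, by ext; rfl⟩
    · intro hj
      obtain ⟨i, _, rfl⟩ := Finset.mem_image.1 hj
      exact Finset.mem_filter.2 ⟨Finset.mem_univ _, i.isLt⟩
  rw [hfilter, Finset.card_image_of_injective _ (Fin.castLE_injective hk)]
  simp

lemma psum_eq_min (n : ℕ) (v : Fin n → ℝ) (k : ℕ) : psum n v k = psum n v (min k n) := by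
  refine Finset.sum_congr rfl fun i _ => ?_
  have hi := i.isLt
  by_cases h : (i : ℕ) < k
  · rw [if_pos h, if_pos (by omega)]
  · rw [if_neg h, if_neg (by omega)]

lemma filter_sorted_card (n : ℕ) (v : Fin n → ℝ) (Q : ℝ → Prop) [DecidablePred Q] :
    (Finset.univ.filter fun i => Q (sortedVec n v i)).card
      = (Finset.univ.filter fun i => Q (v i)).card := by
  apply Finset.card_nbij' (fun i => Tuple.sort v i) (fun j => (Tuple.sort v).symm j) <;>
    simp [Set.MapsTo, Set.LeftInvOn, Set.RightInvOn, Finset.mem_filter] <;> simp [sortedVec]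

lemma filter_sorted_sum (n : ℕ) (v : Fin n → ℝ) (Q : ℝ → Prop) [DecidablePred Q] :
    ∑ i ∈ Finset.univ.filter (fun i => Q (sortedVec n v i)), sortedVec n v i
      = ∑ i ∈ Finset.univ.filter (fun i => Q (v i)), v i := by
  apply Finset.sum_nbij' (fun i => Tuple.sort v i) (fun j => (Tuple.sort v).symm j) <;>
    simp [Finset.mem_filter] <;> simp [sortedVec]

set_option maxHeartbeats 1000000 in
lemma hz_lorenz (n : ℕ) (u : Fin n → Fin n → ℝ)
    (hbin : ∀ i j, u i j = 0 ∨ u i j = 1)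
    (hrow : ∀ i, ∃ j, 0 < u i j)
    (x : Fin n → Fin n → ℝ) (p : Fin n → ℝ)
    (hx : IsHZWithPrices n u x p)
    (z : Fin n → Fin n → ℝ) (hz1 : IsFracAssign n z) (hz2 : IsBalanced n z)
    (k : ℕ) :
    psum n (fun i => util n u i (z i)) k ≤ psum n (fun i => util n u i (x i)) k := by
  classical
  obtain ⟨⟨hx01, hxcol⟩, hxbal, hp0, hKey⟩ := hx
  obtain ⟨hz01, hzcol⟩ := hz1
  set a : Fin n → ℝ := fun i => util n u i (x i) with hadef
  set c : Fin n → ℝ := fun i => util n u i (z i) with hcdef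
  have hu01 : ∀ i j, 0 ≤ u i j ∧ u i j ≤ 1 := by
    intro i j; rcases hbin i j with h | h <;> rw [h] <;> norm_num
  have ha01 : ∀ i, 0 ≤ a i ∧ a i ≤ 1 := by
    intro i
    constructor
    · exact Finset.sum_nonneg fun j _ => mul_nonneg (hu01 i j).1 (hx01 i j).1
    · calc (∑ j, u i j * x i j) ≤ ∑ j, x i j :=
            Finset.sum_le_sum fun j _ => by
              have := (hu01 i j).2; have := (hx01 i j).1; nlinarith
        _ = 1 := hxbal i
  have hc01 : ∀ i, 0 ≤ c i ∧ c i ≤ 1 := by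
    intro i
    constructor
    · exact Finset.sum_nonneg fun j _ => mul_nonneg (hu01 i j).1 (hz01 i j).1
    · calc (∑ j, u i j * z i j) ≤ ∑ j, z i j :=
            Finset.sum_le_sum fun j _ => by
              have := (hu01 i j).2; have := (hz01 i j).1; nlinarith
        _ = 1 := hz2 i
  rcases Nat.eq_zero_or_pos n with rfl | hn
  · simp [psum]
  -- minimum price
  obtain ⟨j0, -, hj0min⟩ :=
    Finset.exists_min_image Finset.univ p ⟨⟨0, hn⟩, Finset.mem_univ _⟩
  set r : ℝ := p j0 with hrdef
  have hrle : ∀ j, r ≤ p j := fun j => hj0min j (Finset.mem_univ j)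
  have hxalloc : ∀ i, IsBalancedAlloc n (x i) := fun i => ⟨fun j => hx01 i j, hxbal i⟩
  have hbud : ∀ i, ∑ j, p j * x i j ≤ 1 := fun i => (hKey i).1
  have hopt := fun i => (hKey i).2.1
  have hmin := fun i => (hKey i).2.2
  have hr0 : 0 ≤ r := hp0 j0
  have hr1 : r ≤ 1 := by
    have h1 : r = ∑ j, r * x ⟨0, hn⟩ j := by
      rw [← Finset.mul_sum, hxbal ⟨0, hn⟩, mul_one]
    have h2 : ∑ j, r * x ⟨0, hn⟩ j ≤ ∑ j, p j * x ⟨0, hn⟩ j :=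
      Finset.sum_le_sum fun j _ =>
        mul_le_mul_of_nonneg_right (hrle j) (hx01 ⟨0, hn⟩ j).1
    linarith [hbud ⟨0, hn⟩]
  -- cheapest liked item
  have hq' : ∀ i, ∃ j1, u i j1 = 1 ∧ ∀ j, u i j = 1 → p j1 ≤ p j := by
    intro i
    obtain ⟨j, hj⟩ := hrow i
    have hj1 : u i j = 1 := by
      rcases hbin i j with h | h
      · linarith
      · exact h
    obtain ⟨j1, hj1mem, hj1min⟩ :=
      Finset.exists_min_image (Finset.univ.filter fun t => u i t = 1) p
        ⟨j, Finset.mem_filter.2 ⟨Finset.mem_univ _, hj1⟩⟩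
    exact ⟨j1, (Finset.mem_filter.1 hj1mem).2,
      fun t ht => hj1min t (Finset.mem_filter.2 ⟨Finset.mem_univ _, ht⟩)⟩
  choose j1 hj1u hj1min using hq'
  set q : Fin n → ℝ := fun i => p (j1 i) with hqdef
  have hq0 : ∀ i, r ≤ q i := fun i => hrle (j1 i)
  -- F2
  have F2 : ∀ i, q i ≤ 1 → a i = 1 := by
    intro i hqi
    obtain ⟨hball, hsum⟩ := one_point_alloc n (j1 i)
    have hprice : (∑ t, p t * if t = j1 i then (1:ℝ) else 0) ≤ 1 := by
      rw [hsum p]; exact hqi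
    have hutil := hopt i _ hball hprice
    have : util n u i (fun t => if t = j1 i then (1:ℝ) else 0) = 1 := by
      rw [util, hsum (u i), hj1u i]
    rw [this] at hutil
    exact le_antisymm (ha01 i).2 hutil
  -- F3 : support structure
  have F3 : ∀ i j, 0 < x i j → (u i j = 1 ∧ p j = q i) ∨ (u i j = 0 ∧ p j = r) := by
    intro i j hxij
    rcases hbin i j with hu0 | hu1
    · right
      refine ⟨hu0, ?_⟩
      by_contra hne'
      have hlt : r < p j := lt_of_le_of_ne (hrle j) (Ne.symm hne')
      have hjne : j ≠ j0 := by
        intro h; rw [h] at hlt; exact lt_irrefl _ hlt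
      obtain ⟨hball, hsum⟩ := move_alloc n (x i) (hxalloc i) j j0 hjne
      have h7 : util n u i
          (fun t => x i t + x i j * ((if t = j0 then 1 else 0) - (if t = j then 1 else 0)))
          = (∑ t, u i t * x i t) + x i j * (u i j0 - u i j) := hsum (u i)
      have hutil : util n u i (x i) ≤ util n u i
          (fun t => x i t + x i j * ((if t = j0 then 1 else 0) - (if t = j then 1 else 0))) := by
        rw [h7, hu0]
        have h1 : 0 ≤ u i j0 := (hu01 i j0).1
        have h2 : util n u i (x i) = ∑ t, u i t * x i t := rfl
        rw [h2]
        nlinarith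
      have hcost := hmin i _ hball hutil
      have h8 : (∑ t, p t * (x i t + x i j * ((if t = j0 then 1 else 0) - (if t = j then 1 else 0))))
          = (∑ t, p t * x i t) + x i j * (p j0 - p j) := hsum p
      rw [h8] at hcost
      nlinarith
    · left
      refine ⟨hu1, ?_⟩
      have hge : q i ≤ p j := hj1min i j hu1
      by_contra hne'
      have hlt : q i < p j := lt_of_le_of_ne hge (Ne.symm hne')
      have hjne : j ≠ j1 i := by
        intro h; rw [h] at hlt; exact lt_irrefl _ hlt
      obtain ⟨hball, hsum⟩ := move_alloc n (x i) (hxalloc i) j (j1 i) hjne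
      have h7 : util n u i
          (fun t => x i t + x i j * ((if t = j1 i then 1 else 0) - (if t = j then 1 else 0)))
          = (∑ t, u i t * x i t) + x i j * (u i (j1 i) - u i j) := hsum (u i)
      have hutil : util n u i (x i) ≤ util n u i
          (fun t => x i t + x i j * ((if t = j1 i then 1 else 0) - (if t = j then 1 else 0))) := by
        rw [h7, hu1, hj1u i]
        have h2 : util n u i (x i) = ∑ t, u i t * x i t := rfl
        rw [h2]
        nlinarith
      have hcost := hmin i _ hball hutil
      have h8 : (∑ t, p t * (x i t + x i j * ((if t = j1 i then 1 else 0) - (if t = j then 1 else 0))))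
          = (∑ t, p t * x i t) + x i j * (p (j1 i) - p j) := hsum p
      rw [h8] at hcost
      nlinarith
  -- F4
  have F4 : ∀ i, 1 < q i → r < 1 := by
    intro i hqi
    rcases lt_or_ge r 1 with h | h
    · exact h
    have hre : r = 1 := le_antisymm hr1 h
    exfalso
    set j : Fin n := j1 i with hjdef
    have hpj : 1 < p j := hqi
    have hcolj : ∑ i'', x i'' j = 1 := hxcol j
    have hex : ∃ i'', 0 < x i'' j := by
      by_contra hcon
      push_neg at hcon
      have : ∑ i'', x i'' j ≤ 0 := Finset.sum_nonpos fun i'' _ => hcon i''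
      linarith
    obtain ⟨i'', hi''⟩ := hex
    rcases F3 i'' j hi'' with ⟨hu, hpq⟩ | ⟨hu, hpq⟩
    · -- p j = q i'' > 1 : budget violated
      have h5 : (p j - 1) * x i'' j ≤ ∑ t, (p t - 1) * x i'' t := by
        apply Finset.single_le_sum (f := fun t => (p t - 1) * x i'' t)
        · intro t _
          have := hrle t
          have := (hx01 i'' t).1
          nlinarith
        · exact Finset.mem_univ j
      have h6 : ∑ t, (p t - 1) * x i'' t = (∑ t, p t * x i'' t) - 1 := by
        have he : ∀ t : Fin n, (p t - 1) * x i'' t = p t * x i'' t - x i'' t := fun t => by ring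
        rw [Finset.sum_congr rfl fun t _ => he t, Finset.sum_sub_distrib, hxbal i'']
      have h9 := hbud i''
      nlinarith
    · rw [hpq, hre] at hpj; exact lt_irrefl _ hpj
  -- F5
  have F5 : ∀ i, 1 < q i → a i = (1 - r) / (q i - r) := by
    intro i hqi
    have hrlt : r < 1 := F4 i hqi
    have hden : 0 < q i - r := by linarith
    -- upper bound
    have hub : a i ≤ (1 - r) / (q i - r) := by
      have hcost_ge : q i * a i + r * (1 - a i) ≤ ∑ t, p t * x i t := by
        have hterm : ∀ t : Fin n,
            (q i * u i t + r * (1 - u i t)) * x i t ≤ p t * x i t := by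
          intro t
          rcases hbin i t with h | h
          · rw [h]
            have := hrle t
            have := (hx01 i t).1
            nlinarith
          · rw [h]
            have := hj1min i t h
            have := (hx01 i t).1
            nlinarith
        have hsum1 : ∑ t, (q i * u i t + r * (1 - u i t)) * x i t
            = q i * a i + r * (1 - a i) := by
          have he : ∀ t : Fin n, (q i * u i t + r * (1 - u i t)) * x i t
              = q i * (u i t * x i t) + r * x i t - r * (u i t * x i t) := fun t => by ring
          rw [Finset.sum_congr rfl fun t _ => he t]
          rw [Finset.sum_sub_distrib, Finset.sum_add_distrib, ← Finset.mul_sum,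
            ← Finset.mul_sum, ← Finset.mul_sum, hxbal i]
          have ha' : a i = ∑ t, u i t * x i t := rfl
          rw [← ha']
          ring
        rw [← hsum1]
        exact Finset.sum_le_sum fun t _ => hterm t
      have := hbud i
      rw [le_div_iff₀ hden]
      nlinarith
    -- lower bound
    set α : ℝ := (1 - r) / (q i - r) with hαdef
    have hα0 : 0 ≤ α := div_nonneg (by linarith) (by linarith)
    have hα1 : α ≤ 1 := by
      rw [div_le_one hden]; linarith
    have hne : j1 i ≠ j0 := by
      intro h
      have : q i = r := by rw [hqdef]; simp only; rw [h]
      linarith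
    obtain ⟨hball, hsum⟩ := two_point_alloc n (j1 i) j0 hne α hα0 hα1
    have hprice : (∑ t, p t * (α * (if t = j1 i then 1 else 0)
        + (1 - α) * (if t = j0 then 1 else 0))) ≤ 1 := by
      rw [hsum p]
      have hcancel : α * (q i - r) = 1 - r := div_mul_cancel₀ _ (ne_of_gt hden)
      have : α * p (j1 i) + (1 - α) * p j0 = α * (q i - r) + r := by
        simp only [hrdef, hqdef]; ring
      rw [this, hcancel]; linarith
    have hutil := hopt i _ hball hprice
    have h7 : util n u i (fun t => α * (if t = j1 i then 1 else 0)
        + (1 - α) * (if t = j0 then 1 else 0)) = α * u i (j1 i) + (1 - α) * u i j0 :=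
      hsum (u i)
    rw [h7, hj1u i] at hutil
    have h8 : 0 ≤ u i j0 := (hu01 i j0).1
    have hlb : α ≤ a i := by nlinarith
    exact le_antisymm hub hlb
  -- F6
  have F6 : ∀ i, a i < 1 → 1 < q i := by
    intro i hai
    by_contra hcon
    push_neg at hcon
    rw [F2 i hcon] at hai
    exact lt_irrefl _ hai
  -- antitone utility
  have F7 : ∀ i i', a i' < 1 → q i' ≤ q i → a i ≤ a i' := by
    intro i i' hai' hq
    have hq1' : 1 < q i' := F6 i' hai'
    have hq1 : 1 < q i := lt_of_lt_of_le hq1' hq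
    have hrlt : r < 1 := F4 i' hq1'
    rw [F5 i hq1, F5 i' hq1']
    apply div_le_div_of_nonneg_left (by linarith) (by linarith) (by linarith)
  -- tight sets
  have htight : ∀ P : Finset (Fin n), (∀ i ∈ P, a i < 1) →
      (∀ i' ∈ P, ∀ i, a i ≤ a i' → i ∈ P) →
      ∑ i ∈ P, c i ≤ ∑ i ∈ P, a i := by
    intro P hPlt hPdown
    set N : Finset (Fin n) := Finset.univ.filter (fun j => ∃ i ∈ P, u i j = 1) with hNdef
    have hcsum : ∀ (y : Fin n → Fin n → ℝ), ∑ i ∈ P, (∑ t, u i t * y i t)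
        = ∑ t : Fin n, ∑ i ∈ P, u i t * y i t := fun y => Finset.sum_comm
    -- step 1
    have step1 : ∑ i ∈ P, c i ≤ ∑ _t ∈ N, (1 : ℝ) := by
      have h1 : ∑ i ∈ P, c i = ∑ t : Fin n, ∑ i ∈ P, u i t * z i t := hcsum z
      have h2 : ∑ t : Fin n, ∑ i ∈ P, u i t * z i t = ∑ t ∈ N, ∑ i ∈ P, u i t * z i t := by
        symm
        apply Finset.sum_subset (Finset.subset_univ N)
        intro t _ htN
        apply Finset.sum_eq_zero
        intro i hiP
        rcases hbin i t with h | h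
        · rw [h, zero_mul]
        · exact absurd (Finset.mem_filter.2 ⟨Finset.mem_univ _, ⟨i, hiP, h⟩⟩) htN
      rw [h1, h2]
      apply Finset.sum_le_sum
      intro t _
      calc ∑ i ∈ P, u i t * z i t ≤ ∑ i ∈ P, z i t := by
            apply Finset.sum_le_sum
            intro i _
            have := (hu01 i t).2; have := (hz01 i t).1
            nlinarith
        _ ≤ ∑ i : Fin n, z i t := by
            apply Finset.sum_le_sum_of_subset_of_nonneg (Finset.subset_univ P)
            intro i _ _
            exact (hz01 i t).1
        _ = 1 := hzcol t
    -- step 2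
    have step2 : ∑ i ∈ P, a i = ∑ _t ∈ N, (1 : ℝ) := by
      have h1 : ∑ i ∈ P, a i = ∑ t : Fin n, ∑ i ∈ P, u i t * x i t := hcsum x
      have h2 : ∑ t : Fin n, ∑ i ∈ P, u i t * x i t = ∑ t ∈ N, ∑ i ∈ P, u i t * x i t := by
        symm
        apply Finset.sum_subset (Finset.subset_univ N)
        intro t _ htN
        apply Finset.sum_eq_zero
        intro i hiP
        rcases hbin i t with h | h
        · rw [h, zero_mul]
        · exact absurd (Finset.mem_filter.2 ⟨Finset.mem_univ _, ⟨i, hiP, h⟩⟩) htN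
      rw [h1, h2]
      apply Finset.sum_congr rfl
      intro t htN
      obtain ⟨i', hi'P, hi'u⟩ := (Finset.mem_filter.1 htN).2
      have hq1' : 1 < q i' := F6 i' (hPlt i' hi'P)
      have hrlt : r < 1 := F4 i' hq1'
      have hpt : q i' ≤ p t := hj1min i' t hi'u
      have hbuyer : ∀ i'', 0 < x i'' t → i'' ∈ P ∧ u i'' t = 1 := by
        intro i'' hxi
        rcases F3 i'' t hxi with ⟨hu, hpq⟩ | ⟨hu, hpq⟩
        · have hqq : q i' ≤ q i'' := by rw [← hpq]; exact hpt
          exact ⟨hPdown i' hi'P i'' (F7 i'' i' (hPlt i' hi'P) hqq), hu⟩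
        · exfalso
          rw [hpq] at hpt
          linarith
      have e1 : ∑ i ∈ P, u i t * x i t = ∑ i : Fin n, u i t * x i t := by
        apply Finset.sum_subset (Finset.subset_univ P)
        intro i'' _ hni
        rcases eq_or_lt_of_le (hx01 i'' t).1 with h | h
        · rw [← h, mul_zero]
        · exact absurd (hbuyer i'' h).1 hni
      have e2 : ∑ i : Fin n, u i t * x i t = ∑ i : Fin n, x i t := by
        apply Finset.sum_congr rfl
        intro i'' _
        rcases eq_or_lt_of_le (hx01 i'' t).1 with h | h
        · rw [← h, mul_zero]
        · rw [(hbuyer i'' h).2, one_mul]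
      rw [e1, e2, hxcol t]
    rw [step2]
    exact step1
  -- main combinatorial argument
  suffices H : ∀ kk, kk ≤ n → psum n c kk ≤ psum n a kk by
    rw [psum_eq_min n c k, psum_eq_min n a k]
    exact H (min k n) (min_le_right k n)
  intro kk hkk
  rcases Nat.eq_zero_or_pos kk with rfl | hkk0
  · simp [psum]
  obtain ⟨k', rfl⟩ : ∃ m', kk = m' + 1 := ⟨kk - 1, by omega⟩
  have hklt : k' < n := by omega
  have hwmono : Monotone (sortedVec n a) := sortedVec_monotone n a
  set v : ℝ := sortedVec n a ⟨k', hklt⟩ with hvdef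
  have hw1 : ∀ i : Fin n, sortedVec n a i ≤ 1 := fun i => (ha01 _).2
  have hv1 : v ≤ 1 := hw1 _
  set P : Finset (Fin n) := Finset.univ.filter (fun i => a i < v) with hPdef
  set G : Finset (Fin n) := Finset.univ.filter (fun i => a i = v) with hGdef
  set F : Finset (Fin n) := Finset.univ.filter (fun i : Fin n => (i : ℕ) < k' + 1) with hFdef
  set Fv : Finset (Fin n) := Finset.univ.filter (fun i => sortedVec n a i < v) with hFvdef
  set Fe : Finset (Fin n) := F.filter (fun i => sortedVec n a i = v) with hFedef
  have hFvF : Fv ⊆ F := by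
    intro i hi
    have hwi : sortedVec n a i < v := (Finset.mem_filter.1 hi).2
    have hlt : (i : ℕ) < k' + 1 := by
      by_contra hcon
      push_neg at hcon
      have hle : (⟨k', hklt⟩ : Fin n) ≤ i := by
        rw [Fin.le_def]; simp only; omega
      exact absurd (hwmono hle) (not_le.2 hwi)
    exact Finset.mem_filter.2 ⟨Finset.mem_univ _, hlt⟩
  have hFle : ∀ i ∈ F, sortedVec n a i ≤ v := by
    intro i hi
    have h1 : (i : ℕ) < k' + 1 := (Finset.mem_filter.1 hi).2
    have hle : i ≤ (⟨k', hklt⟩ : Fin n) := by rw [Fin.le_def]; simp only; omega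
    exact hwmono hle
  have hsplit : F = Fv ∪ Fe := by
    ext i
    constructor
    · intro hi
      rcases lt_or_eq_of_le (hFle i hi) with h | h
      · exact Finset.mem_union_left _ (Finset.mem_filter.2 ⟨Finset.mem_univ _, h⟩)
      · exact Finset.mem_union_right _ (Finset.mem_filter.2 ⟨hi, h⟩)
    · intro hi
      rcases Finset.mem_union.1 hi with h | h
      · exact hFvF h
      · exact Finset.mem_of_mem_filter _ h
  have hdisjVE : Disjoint Fv Fe := by
    rw [Finset.disjoint_left]
    intro i hi1 hi2
    have h1 := (Finset.mem_filter.1 hi1).2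
    have h2 := (Finset.mem_filter.1 hi2).2
    rw [h2] at h1
    exact lt_irrefl _ h1
  have hFcard : F.card = k' + 1 := card_filter_lt n (k' + 1) (by omega)
  set m : ℕ := Fe.card with hmdef
  have hPFv : Fv.card = P.card := filter_sorted_card n a (fun t => t < v)
  have hcards : P.card + m = k' + 1 := by
    rw [← hPFv, hmdef, ← Finset.card_union_of_disjoint hdisjVE, ← hsplit, hFcard]
  have hm1 : 1 ≤ m := by
    have hmem : (⟨k', hklt⟩ : Fin n) ∈ Fe := by
      refine Finset.mem_filter.2 ⟨Finset.mem_filter.2 ⟨Finset.mem_univ _, by simp⟩, rfl⟩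
    rw [hmdef]
    exact Finset.card_pos.2 ⟨_, hmem⟩
  have hmG : m ≤ G.card := by
    have hsub : Fe ⊆ Finset.univ.filter (fun i => sortedVec n a i = v) := fun i hi =>
      Finset.mem_filter.2 ⟨Finset.mem_univ _, (Finset.mem_filter.1 hi).2⟩
    have h1 := Finset.card_le_card hsub
    have hGw : (Finset.univ.filter (fun i => sortedVec n a i = v)).card = G.card :=
      filter_sorted_card n a (fun t => t = v)
    omega
  have hpsa : psum n a (k' + 1) = (∑ i ∈ P, a i) + (m : ℝ) * v := by
    rw [psum_eq_sum_filter, ← hFdef, hsplit, Finset.sum_union hdisjVE]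
    congr 1
    · exact filter_sorted_sum n a (fun t => t < v)
    · have hconst : ∀ i ∈ Fe, sortedVec n a i = v := fun i hi => (Finset.mem_filter.1 hi).2
      rw [Finset.sum_congr rfl hconst, Finset.sum_const, nsmul_eq_mul]
  have hPa : ∑ i ∈ P, c i ≤ ∑ i ∈ P, a i := by
    apply htight
    · intro i hi
      exact lt_of_lt_of_le (Finset.mem_filter.1 hi).2 hv1
    · intro i' hi' i hle
      exact Finset.mem_filter.2
        ⟨Finset.mem_univ _, lt_of_le_of_lt hle (Finset.mem_filter.1 hi').2⟩
  have hdisjPG : Disjoint P G := by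
    rw [Finset.disjoint_left]
    intro i h1 h2
    have h3 := (Finset.mem_filter.1 h1).2
    rw [(Finset.mem_filter.1 h2).2] at h3
    exact lt_irrefl _ h3
  have hPG : (∑ i ∈ P ∪ G, c i) ≤ ∑ i ∈ P ∪ G, a i := by
    rcases lt_or_eq_of_le hv1 with hvlt | hveq
    · apply htight
      · intro i hi
        rcases Finset.mem_union.1 hi with h | h
        · exact lt_trans (Finset.mem_filter.1 h).2 hvlt
        · rw [(Finset.mem_filter.1 h).2]; exact hvlt
      · intro i' hi' i hle
        have hi'v : a i' ≤ v := by
          rcases Finset.mem_union.1 hi' with h | h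
          · exact le_of_lt (Finset.mem_filter.1 h).2
          · exact le_of_eq (Finset.mem_filter.1 h).2
        rcases lt_or_eq_of_le (le_trans hle hi'v) with h | h
        · exact Finset.mem_union_left _ (Finset.mem_filter.2 ⟨Finset.mem_univ _, h⟩)
        · exact Finset.mem_union_right _ (Finset.mem_filter.2 ⟨Finset.mem_univ _, h⟩)
    · have huniv : P ∪ G = Finset.univ := by
        apply Finset.eq_univ_of_forall
        intro i
        rcases lt_or_eq_of_le (ha01 i).2 with h | h
        · exact Finset.mem_union_left _
            (Finset.mem_filter.2 ⟨Finset.mem_univ _, by rw [← hveq] at h; exact h⟩)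
        · exact Finset.mem_union_right _
            (Finset.mem_filter.2 ⟨Finset.mem_univ _, by rw [← hveq] at h; exact h⟩)
      rw [huniv]
      have hc1 : ∑ i ∈ Finset.univ \ P, c i ≤ ∑ i ∈ Finset.univ \ P, a i := by
        apply Finset.sum_le_sum
        intro i hi
        have hiP : i ∉ P := (Finset.mem_sdiff.1 hi).2
        have h2 : ¬ a i < v := fun hcon =>
          hiP (Finset.mem_filter.2 ⟨Finset.mem_univ _, hcon⟩)
        have hai : a i = 1 := le_antisymm (ha01 i).2 (by rw [← hveq]; linarith)
        rw [hai]
        exact (hc01 i).2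
      have e3 := Finset.sum_sdiff (Finset.subset_univ P) (f := c)
      have e4 := Finset.sum_sdiff (Finset.subset_univ P) (f := a)
      linarith
  obtain ⟨M, hMG, hMcard, hMavg⟩ := exists_avg_subset G c m hmG
  have hdisjPM : Disjoint P M := Finset.disjoint_left.2 fun i hiP hiM =>
    Finset.disjoint_left.1 hdisjPG hiP (hMG hiM)
  have hScard : (P ∪ M).card = k' + 1 := by
    rw [Finset.card_union_of_disjoint hdisjPM, hMcard]
    omega
  have hpsc : psum n c (k' + 1) ≤ ∑ i ∈ P ∪ M, c i := by
    have h1 := sum_sorted_prefix_le n c (P ∪ M)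
    rw [hScard] at h1
    exact h1
  have hSsum : ∑ i ∈ P ∪ M, c i = ∑ i ∈ P, c i + ∑ i ∈ M, c i := Finset.sum_union hdisjPM
  have hGsum_a : ∑ i ∈ G, a i = (G.card : ℝ) * v := by
    rw [Finset.sum_congr rfl (fun i hi => (Finset.mem_filter.1 hi).2),
      Finset.sum_const, nsmul_eq_mul]
  have hPGc : ∑ i ∈ P ∪ G, c i = ∑ i ∈ P, c i + ∑ i ∈ G, c i := Finset.sum_union hdisjPG
  have hPGa : ∑ i ∈ P ∪ G, a i = ∑ i ∈ P, a i + (G.card : ℝ) * v := by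
    rw [Finset.sum_union hdisjPG, hGsum_a]
  rw [hpsa]
  have hmg : (m : ℝ) ≤ (G.card : ℝ) := by exact_mod_cast hmG
  have hm1' : (1 : ℝ) ≤ (m : ℝ) := by exact_mod_cast hm1
  have hABa : ∑ i ∈ P, c i + ∑ i ∈ G, c i ≤ ∑ i ∈ P, a i + (G.card : ℝ) * v := by
    rw [← hPGc, ← hPGa]
    exact hPG
  have hgoal : ∑ i ∈ P, c i + ∑ i ∈ M, c i ≤ ∑ i ∈ P, a i + (m : ℝ) * v := by
    have hgpos : (0 : ℝ) < (G.card : ℝ) := by linarith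
    have h2 : (G.card : ℝ) * (∑ i ∈ P, c i + ∑ i ∈ M, c i)
        ≤ (G.card : ℝ) * (∑ i ∈ P, a i + (m : ℝ) * v) := by
      nlinarith [hMavg, mul_nonneg (sub_nonneg.2 hmg) (sub_nonneg.2 hPa),
        mul_le_mul_of_nonneg_left hABa (by linarith : (0 : ℝ) ≤ (m : ℝ))]
    exact le_of_mul_le_mul_left h2 hgpos
  linarith
set_option maxHeartbeats 1000000 in
/-- Under 1-0 utilities, every HZ solution gives each agent the same
utility as any balanced fractional assignment that is leximin-optimal among
balanced fractional assignments. -/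
theorem hz_eq_leximin_balanced_of_binary (n : ℕ) (u : Fin n → Fin n → ℝ)
    (hbin : ∀ i j, u i j = 0 ∨ u i j = 1)
    (hrow : ∀ i, ∃ j, 0 < u i j) (hcol : ∀ j, ∃ i, 0 < u i j)
    (x y : Fin n → Fin n → ℝ)
    (hx : IsHZ n u x)
    (hy : IsFracAssign n y ∧ IsBalanced n y ∧
      ∀ z, IsFracAssign n z → IsBalanced n z →
        toLex (sortedVec n (fun i => util n u i (z i))) ≤
          toLex (sortedVec n (fun i => util n u i (y i)))) :
    ∀ i, util n u i (x i) = util n u i (y i) := by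
  classical
  obtain ⟨p, hxp⟩ := hx
  have hxfrac : IsFracAssign n x := hxp.1
  have hxbal : IsBalanced n x := hxp.2.1
  obtain ⟨hyfrac, hybal, hyopt⟩ := hy
  -- utility profiles
  set A : Fin n → ℝ := fun i => util n u i (x i) with hAdef
  set B : Fin n → ℝ := fun i => util n u i (y i) with hBdef
  have step1 : toLex (sortedVec n A) ≤ toLex (sortedVec n B) := hyopt x hxfrac hxbal
  have step2 : ∀ k, psum n B k ≤ psum n A k := fun k =>
    hz_lorenz n u hbin hrow x p hxp y hyfrac hybal k
  have step3 : toLex (sortedVec n B) ≤ toLex (sortedVec n A) :=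
    lex_le_of_psum_le n A B step2
  have hsorted_eq : sortedVec n A = sortedVec n B :=
    toLex.injective (le_antisymm step1 step3)
  have hpsum_ab : ∀ k, psum n A k = psum n B k := fun k => by
    rw [psum, psum, hsorted_eq]
  -- the midpoint assignment
  set zm : Fin n → Fin n → ℝ := fun i j => (x i j + y i j) / 2 with hzmdef
  have hzmfrac : IsFracAssign n zm := by
    constructor
    · intro i j
      have h1 := hxfrac.1 i j
      have h2 := hyfrac.1 i j
      constructor
      · simp only [hzmdef]; linarith [h1.1, h2.1]
      · simp only [hzmdef]; linarith [h1.2, h2.2]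
    · intro j
      have h1 := hxfrac.2 j
      have h2 := hyfrac.2 j
      simp only [hzmdef]
      rw [Finset.sum_congr rfl
        (fun i _ => show (x i j + y i j) / 2 = x i j / 2 + y i j / 2 from by ring)]
      rw [Finset.sum_add_distrib, ← Finset.sum_div, ← Finset.sum_div, h1, h2]
      norm_num
  have hzmbal : IsBalanced n zm := by
    intro i
    have h1 := hxbal i
    have h2 := hybal i
    simp only [hzmdef]
    rw [Finset.sum_congr rfl
      (fun j _ => show (x i j + y i j) / 2 = x i j / 2 + y i j / 2 from by ring)]
    rw [Finset.sum_add_distrib, ← Finset.sum_div, ← Finset.sum_div, h1, h2]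
    norm_num
  set Mid : Fin n → ℝ := fun i => util n u i (zm i) with hMiddef
  have hzmut : ∀ i, Mid i = (A i + B i) / 2 := by
    intro i
    have h1 : Mid i = ∑ j, u i j * ((x i j + y i j) / 2) := rfl
    have h2 : A i = ∑ j, u i j * x i j := rfl
    have h3 : B i = ∑ j, u i j * y i j := rfl
    rw [h1, h2, h3]
    rw [Finset.sum_congr rfl (fun j _ =>
      show u i j * ((x i j + y i j) / 2) = (u i j * x i j + u i j * y i j) / 2 from by ring)]
    rw [← Finset.sum_div, Finset.sum_add_distrib]
  have step4 : ∀ k, psum n Mid k ≤ psum n A k := fun k =>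
    hz_lorenz n u hbin hrow x p hxp zm hzmfrac hzmbal k
  -- extract pointwise equality
  set σ : Equiv.Perm (Fin n) := Tuple.sort Mid with hσdef
  have hS : ∀ k : ℕ, k ≤ n → ∀ f : Fin n → ℝ,
      ∑ i ∈ (Finset.univ.filter fun i : Fin n => (i : ℕ) < k).image σ, f i
        = ∑ i ∈ Finset.univ.filter (fun i : Fin n => (i : ℕ) < k), f (σ i) := by
    intro k _ f
    rw [Finset.sum_image (fun a _ b _ h => σ.injective h)]
  have hScard : ∀ k : ℕ, k ≤ n →
      ((Finset.univ.filter fun i : Fin n => (i : ℕ) < k).image σ).card = k := by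
    intro k hk
    rw [Finset.card_image_of_injective _ σ.injective, card_filter_lt n k hk]
  have hMidsum : ∀ k : ℕ, psum n Mid k
      = ∑ i ∈ Finset.univ.filter (fun i : Fin n => (i : ℕ) < k), Mid (σ i) := by
    intro k
    rw [psum_eq_sum_filter]
    exact Finset.sum_congr rfl fun i _ => rfl
  have EA : ∀ k : ℕ, k ≤ n →
      (∑ i ∈ Finset.univ.filter (fun i : Fin n => (i : ℕ) < k), A (σ i)) = psum n A k ∧
      (∑ i ∈ Finset.univ.filter (fun i : Fin n => (i : ℕ) < k), B (σ i)) = psum n B k := by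
    intro k hk
    have hA1 : psum n A k ≤ ∑ i ∈ Finset.univ.filter (fun i : Fin n => (i : ℕ) < k), A (σ i) := by
      have h := sum_sorted_prefix_le n A ((Finset.univ.filter fun i : Fin n => (i : ℕ) < k).image σ)
      rw [hScard k hk, hS k hk A] at h
      exact h
    have hB1 : psum n B k ≤ ∑ i ∈ Finset.univ.filter (fun i : Fin n => (i : ℕ) < k), B (σ i) := by
      have h := sum_sorted_prefix_le n B ((Finset.univ.filter fun i : Fin n => (i : ℕ) < k).image σ)
      rw [hScard k hk, hS k hk B] at h
      exact h
    have hMid :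
        (∑ i ∈ Finset.univ.filter (fun i : Fin n => (i : ℕ) < k), A (σ i))
          + (∑ i ∈ Finset.univ.filter (fun i : Fin n => (i : ℕ) < k), B (σ i))
          = 2 * psum n Mid k := by
      rw [hMidsum k, ← Finset.sum_add_distrib, Finset.mul_sum]
      refine Finset.sum_congr rfl fun i _ => ?_
      rw [hzmut (σ i)]
      ring
    have h4 := step4 k
    have h5 := hpsum_ab k
    constructor <;> linarith
  have hkey : ∀ j : Fin n, A (σ j) = sortedVec n A j ∧ B (σ j) = sortedVec n B j := by
    intro j
    have hj1 : (j : ℕ) + 1 ≤ n := j.isLt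
    have hj0 : (j : ℕ) ≤ n := le_of_lt j.isLt
    have hins : Finset.univ.filter (fun i : Fin n => (i : ℕ) < (j : ℕ) + 1)
        = insert j (Finset.univ.filter (fun i : Fin n => (i : ℕ) < (j : ℕ))) := by
      ext t
      simp only [Finset.mem_filter, Finset.mem_univ, true_and, Finset.mem_insert, Fin.ext_iff]
      omega
    have hjnot : j ∉ Finset.univ.filter (fun i : Fin n => (i : ℕ) < (j : ℕ)) := by
      simp
    obtain ⟨hEA1, hEB1⟩ := EA ((j : ℕ) + 1) hj1
    obtain ⟨hEA0, hEB0⟩ := EA (j : ℕ) hj0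
    rw [hins, Finset.sum_insert hjnot] at hEA1 hEB1
    have hpsA := psum_succ n A (j : ℕ) j.isLt
    have hpsB := psum_succ n B (j : ℕ) j.isLt
    have hjeq : (⟨(j : ℕ), j.isLt⟩ : Fin n) = j := by ext; rfl
    rw [hjeq] at hpsA hpsB
    constructor <;> linarith
  intro i
  have h := hkey (σ.symm i)
  rw [Equiv.apply_symm_apply] at h
  show A i = B i
  rw [h.1, h.2, hsorted_eq]
end

section
/- Under 1-0 utilities (every u_{ij} ∈ {0,1}), the HZ rule is equivalent to maximum Nash welfare applied to the set of balanced assignments: for every HZ solution x and every balanced fractional assignment y maximizing the Nash welfare ∏_i Σ_j u_{ij} y_{ij} among balanced fractional assignments, every agent i receives the same utility in x as in y. -/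
open Finset

lemma twopt_balanced (n : ℕ) (t : ℝ) (j0 j1 : Fin n) (h0 : 0 ≤ t) (h1 : t ≤ 1) :
    IsBalancedAlloc n (fun j => (if j = j0 then t else 0) + (if j = j1 then 1 - t else 0)) := by
  refine ⟨fun j => ⟨?_, ?_⟩, ?_⟩
  · simp only; split_ifs <;> simp <;> linarith
  · simp only; split_ifs <;> simp <;> linarith
  · rw [Finset.sum_add_distrib]
    rw [Finset.sum_ite_eq' Finset.univ j0 (fun _ => t),
      Finset.sum_ite_eq' Finset.univ j1 (fun _ => 1 - t)]
    simp

lemma twopt_sum (n : ℕ) (f : Fin n → ℝ) (t : ℝ) (j0 j1 : Fin n) :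
    ∑ j, f j * ((if j = j0 then t else 0) + (if j = j1 then 1 - t else 0))
      = f j0 * t + f j1 * (1 - t) := by
  simp only [mul_add, Finset.sum_add_distrib, mul_ite, mul_zero]
  rw [Finset.sum_ite_eq' Finset.univ j0 (fun j => f j * t),
    Finset.sum_ite_eq' Finset.univ j1 (fun j => f j * (1 - t))]
  simp

lemma prod_le_one_of_sum_le' (n : ℕ) (hn : 0 < n) (a : Fin n → ℝ) (h0 : ∀ i, 0 ≤ a i)
    (hs : ∑ i, a i ≤ n) : ∏ i, a i ≤ 1 := by
  have hn' : (0:ℝ) < n := Nat.cast_pos.mpr hn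
  have h := Real.geom_mean_le_arith_mean_weighted Finset.univ (fun _ => (n:ℝ)⁻¹) a
    (fun _ _ => by positivity) (by simp; field_simp) (fun i _ => h0 i)
  have h2 : ∑ i, (n:ℝ)⁻¹ * a i ≤ 1 := by
    rw [← Finset.mul_sum, inv_mul_le_iff₀ hn', mul_one]
    exact hs
  have h3 : ∏ i, a i ^ ((n:ℝ)⁻¹) ≤ 1 := le_trans h h2
  have h4 : (0:ℝ) ≤ ∏ i, a i ^ ((n:ℝ)⁻¹) :=
    Finset.prod_nonneg fun i _ => Real.rpow_nonneg (h0 i) _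
  calc ∏ i, a i = (∏ i, a i ^ ((n:ℝ)⁻¹)) ^ n := by
        rw [← Finset.prod_pow]
        refine Finset.prod_congr rfl fun i _ => ?_
        rw [← Real.rpow_natCast (a i ^ ((n:ℝ)⁻¹)) n, ← Real.rpow_mul (h0 i),
          inv_mul_cancel₀ (ne_of_gt hn'), Real.rpow_one]
    _ ≤ 1 ^ n := pow_le_pow_left₀ h4 h3 n
    _ = 1 := one_pow n

set_option maxHeartbeats 1600000 in
/-- Under 1-0 utilities, every HZ solution gives each agent the same
utility as any balanced fractional assignment maximizing Nash welfare among
balanced fractional assignments. -/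
theorem hz_eq_mnw_balanced_of_binary (n : ℕ) (u : Fin n → Fin n → ℝ)
    (hbin : ∀ i j, u i j = 0 ∨ u i j = 1)
    (hrow : ∀ i, ∃ j, 0 < u i j) (hcol : ∀ j, ∃ i, 0 < u i j)
    (x y : Fin n → Fin n → ℝ)
    (hx : IsHZ n u x)
    (hy : IsFracAssign n y ∧ IsBalanced n y ∧
      ∀ z, IsFracAssign n z → IsBalanced n z →
        ∏ i, util n u i (z i) ≤ ∏ i, util n u i (y i)) :
    ∀ i, util n u i (x i) = util n u i (y i) := by
  obtain ⟨p, hxfa, hxbal, hpnn, hopt⟩ := hx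
  obtain ⟨hyfa, hybal, hymax⟩ := hy
  rcases Nat.eq_zero_or_pos n with hn0 | hn
  · subst hn0; intro i; exact i.elim0
  have hu01 : ∀ i j, 0 ≤ u i j ∧ u i j ≤ 1 := fun i j => by
    rcases hbin i j with h | h <;> simp [h]
  -- utilities are in [0,1] for any balanced fractional assignment
  have hv01 : ∀ (z : Fin n → Fin n → ℝ), IsFracAssign n z → IsBalanced n z → ∀ i,
      0 ≤ util n u i (z i) ∧ util n u i (z i) ≤ 1 := by
    intro z hz hzb i
    constructor
    · exact Finset.sum_nonneg fun j _ => mul_nonneg (hu01 i j).1 (hz.1 i j).1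
    · calc util n u i (z i) = ∑ j, u i j * z i j := rfl
        _ ≤ ∑ j, z i j := Finset.sum_le_sum fun j _ => by
            nlinarith [(hu01 i j).1, (hu01 i j).2, (hz.1 i j).1]
        _ = 1 := hzb i
  set v : Fin n → ℝ := fun i => util n u i (x i) with hvdef
  -- cheapest item
  obtain ⟨jβ, -, hjβ⟩ := Finset.exists_min_image Finset.univ p ⟨⟨0, hn⟩, Finset.mem_univ _⟩
  set β := p jβ with hβdef
  have hβle : ∀ j, β ≤ p j := fun j => hjβ j (Finset.mem_univ j)
  have hβ0 : 0 ≤ β := hpnn jβ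
  -- cheapest liked item of each agent
  have hL : ∀ i, ∃ j0 : Fin n, u i j0 = 1 ∧ ∀ j, u i j = 1 → p j0 ≤ p j := by
    intro i
    obtain ⟨j1, hj1⟩ := hrow i
    have hj1' : u i j1 = 1 := (hbin i j1).resolve_left (by linarith)
    obtain ⟨j0, hj0mem, hj0min⟩ := Finset.exists_min_image
      (Finset.univ.filter fun j => u i j = 1) p ⟨j1, by simp [hj1']⟩
    exact ⟨j0, (Finset.mem_filter.mp hj0mem).2, fun j hj => hj0min j (by simp [hj])⟩
  choose j0 hj0u hj0min using hL
  set α : Fin n → ℝ := fun i => p (j0 i) with hαdef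
  have hαβ : ∀ i, β ≤ α i := fun i => hβle _
  set spend : Fin n → ℝ := fun i => ∑ j, p j * x i j with hspenddef
  have hspendle : ∀ i, spend i ≤ 1 := fun i => (hopt i).1
  have hmoney : ∑ i, spend i = ∑ j, p j := by
    calc ∑ i, spend i = ∑ j, ∑ i, p j * x i j := Finset.sum_comm
      _ = ∑ j, p j * ∑ i, x i j := by simp [Finset.mul_sum]
      _ = ∑ j, p j := by simp [hxfa.2]
  have hppn : ∑ j, p j ≤ n := by
    rw [← hmoney]
    calc ∑ i, spend i ≤ ∑ _i : Fin n, (1:ℝ) := Finset.sum_le_sum fun i _ => hspendle i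
      _ = n := by simp
  have hβ1 : β ≤ 1 := by
    by_contra h
    push_neg at h
    have h2 : (n:ℝ) < ∑ j, p j := by
      calc (n:ℝ) = ∑ _j : Fin n, (1:ℝ) := by simp
        _ < ∑ j, p j := Finset.sum_lt_sum_of_nonempty ⟨⟨0, hn⟩, mem_univ _⟩
            fun j _ => lt_of_lt_of_le h (hβle j)
    linarith
  -- spend formula
  have hspend : ∀ i, spend i = α i * v i + β * (1 - v i) := by
    intro i
    have hvi := hv01 x hxfa hxbal i
    refine le_antisymm ?_ ?_
    · -- upper bound via cost-minimality (b)
      have hba := twopt_balanced n (v i) (j0 i) jβ hvi.1 hvi.2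
      have hu : util n u i (x i) ≤ util n u i
          (fun j => (if j = j0 i then v i else 0) + (if j = jβ then 1 - v i else 0)) := by
        have : util n u i (fun j => (if j = j0 i then v i else 0) + (if j = jβ then 1 - v i else 0))
            = u i (j0 i) * v i + u i jβ * (1 - v i) := twopt_sum n (u i) (v i) (j0 i) jβ
        rw [this, hj0u i]
        nlinarith [(hu01 i jβ).1, hvi.2]
      have hc := (hopt i).2.2 _ hba hu
      calc spend i ≤ ∑ j, p j * ((if j = j0 i then v i else 0) + (if j = jβ then 1 - v i else 0)) := hc
        _ = α i * v i + β * (1 - v i) := twopt_sum n p (v i) (j0 i) jβ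
    · -- lower bound
      have h1 : ∀ j, α i * (u i j * x i j) + β * ((1 - u i j) * x i j) ≤ p j * x i j := by
        intro j
        rcases hbin i j with h | h
        · simp only [h, zero_mul, mul_zero, zero_add, sub_zero, one_mul]
          exact mul_le_mul_of_nonneg_right (hβle j) (hxfa.1 i j).1
        · simp only [h, one_mul, sub_self, zero_mul, mul_zero, add_zero]
          exact mul_le_mul_of_nonneg_right (hj0min i j h) (hxfa.1 i j).1
      have h2 : ∑ j, (1 - u i j) * x i j = 1 - v i := by
        simp only [sub_mul, one_mul]
        rw [Finset.sum_sub_distrib, hxbal i]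
        rfl
      calc α i * v i + β * (1 - v i)
          = ∑ j, (α i * (u i j * x i j) + β * ((1 - u i j) * x i j)) := by
            rw [Finset.sum_add_distrib, ← Finset.mul_sum, ← Finset.mul_sum, h2]
            rfl
        _ ≤ ∑ j, p j * x i j := Finset.sum_le_sum fun j _ => h1 j
  -- budget exhaustion for agents below utility 1
  have hfull : ∀ i, v i < 1 → spend i = 1 := by
    intro i hvi1
    by_contra hne
    have hvi := hv01 x hxfa hxbal i
    have hs1 : spend i < 1 := lt_of_le_of_ne (hspendle i) hne
    have hd : (0:ℝ) < α i - β + 1 := by linarith [hαβ i]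
    set ε := min (1 - v i) ((1 - spend i) / (α i - β + 1)) with hεdef
    have hε0 : 0 < ε := lt_min (by linarith) (div_pos (by linarith) hd)
    set t := v i + ε with htdef
    have ht1 : t ≤ 1 := by
      have := min_le_left (1 - v i) ((1 - spend i) / (α i - β + 1))
      simp only [htdef]
      linarith [hεdef ▸ this]
    have ht0 : 0 ≤ t := by simp only [htdef]; linarith [hvi.1]
    have hba := twopt_balanced n t (j0 i) jβ ht0 ht1
    have hcost : ∑ j, p j * ((if j = j0 i then t else 0) + (if j = jβ then 1 - t else 0)) ≤ 1 := by
      rw [twopt_sum n p t (j0 i) jβ]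
      have hεle : ε ≤ (1 - spend i) / (α i - β + 1) := min_le_right _ _
      have hkey : ε * (α i - β) ≤ 1 - spend i := by
        calc ε * (α i - β) ≤ ((1 - spend i) / (α i - β + 1)) * (α i - β) :=
              mul_le_mul_of_nonneg_right hεle (by linarith [hαβ i])
          _ ≤ 1 - spend i := by
              rw [div_mul_eq_mul_div, div_le_iff₀ hd]
              nlinarith [hαβ i]
      have hsp := hspend i
      nlinarith
    have hle := (hopt i).2.1 _ hba hcost
    have h3 : util n u i (fun j => (if j = j0 i then t else 0) + (if j = jβ then 1 - t else 0))
        = u i (j0 i) * t + u i jβ * (1 - t) := twopt_sum n (u i) t (j0 i) jβ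
    rw [h3, hj0u i] at hle
    nlinarith [(hu01 i jβ).1]
  -- MAIN: key positivity and sum bound
  have hmain : (∀ i, 0 < v i) ∧ ∀ z, IsFracAssign n z → IsBalanced n z →
      ∑ i, util n u i (z i) / v i ≤ n := by
    by_cases hβc : β < 1
    · -- generic case
      have hvpos : ∀ i, 0 < v i := by
        intro i
        have hvi : 0 ≤ v i ∧ v i ≤ 1 := hv01 x hxfa hxbal i
        rcases lt_or_eq_of_le hvi.2 with h | h
        · rcases eq_or_lt_of_le hvi.1 with h0 | h0
          · exfalso
            have h1 := hfull i h
            rw [hspend i, ← h0] at h1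
            simp at h1
            linarith
          · exact h0
        · rw [h]; exact one_pos
      refine ⟨hvpos, ?_⟩
      intro z hzf hzb
      set μ : Fin n → ℝ := fun i => (1 - spend i) / (1 - β) with hμdef
      set lam : Fin n → ℝ := fun j => (p j - β) / (1 - β) with hlamdef
      have hμ0 : ∀ i, 0 ≤ μ i := fun i => div_nonneg (by linarith [hspendle i]) (by linarith)
      have hlam0 : ∀ j, 0 ≤ lam j := fun j => div_nonneg (by linarith [hβle j]) (by linarith)
      have hkey : ∀ i j, u i j * z i j / v i ≤ (μ i + lam j) * z i j := by
        intro i j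
        rcases hbin i j with h | h
        · rw [h]
          simp only [zero_mul, zero_div]
          exact mul_nonneg (add_nonneg (hμ0 i) (hlam0 j)) (hzf.1 i j).1
        · have h1 : 1 / v i ≤ μ i + lam j := by
            have hml : μ i + lam j = (1 - spend i + (p j - β)) / (1 - β) := by
              rw [hμdef, hlamdef]
              simp only
              rw [← add_div]
            have hNv : 1 - β ≤ (1 - spend i + (p j - β)) * v i := by
              have hαp : α i ≤ p j := hj0min i j h
              have hsp := hspend i
              have hvi : 0 ≤ v i ∧ v i ≤ 1 := hv01 x hxfa hxbal i
              rcases lt_or_eq_of_le hvi.2 with hc | hc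
              · have hf := hfull i hc
                nlinarith [mul_le_mul_of_nonneg_right hαp hvi.1, hvpos i]
              · rw [hc] at hsp ⊢
                simp only [mul_one]
                nlinarith
            rw [hml, div_le_div_iff₀ (hvpos i) (by linarith : (0:ℝ) < 1 - β)]
            nlinarith
          calc u i j * z i j / v i = (1 / v i) * z i j := by rw [h]; ring
            _ ≤ (μ i + lam j) * z i j := mul_le_mul_of_nonneg_right h1 (hzf.1 i j).1
      calc ∑ i, util n u i (z i) / v i = ∑ i, ∑ j, u i j * z i j / v i := by
            refine Finset.sum_congr rfl fun i _ => ?_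
            rw [util, Finset.sum_div]
        _ ≤ ∑ i, ∑ j, (μ i + lam j) * z i j :=
            Finset.sum_le_sum fun i _ => Finset.sum_le_sum fun j _ => hkey i j
        _ = (∑ i, μ i) + ∑ j, lam j := by
            simp only [add_mul, Finset.sum_add_distrib]
            congr 1
            · refine Finset.sum_congr rfl fun i _ => ?_
              rw [← Finset.mul_sum, hzb i, mul_one]
            · rw [Finset.sum_comm]
              refine Finset.sum_congr rfl fun j _ => ?_
              rw [← Finset.mul_sum, hzf.2 j, mul_one]
        _ ≤ n := by
            have hb : (1:ℝ) - β ≠ 0 := by linarith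
            have h1 : ∑ i, μ i = ((n:ℝ) - ∑ i, spend i) / (1 - β) := by
              rw [hμdef, ← Finset.sum_div]
              congr 1
              rw [Finset.sum_sub_distrib]
              simp
            have h2 : ∑ j, lam j = ((∑ j, p j) - n * β) / (1 - β) := by
              rw [hlamdef, ← Finset.sum_div]
              congr 1
              rw [Finset.sum_sub_distrib]
              simp [mul_comm]
            rw [h1, h2, hmoney, ← add_div, div_le_iff₀ (by linarith : (0:ℝ) < 1 - β)]
            ring_nf
            nlinarith [hppn]
    · -- β = 1 case: all prices equal 1 and all utilities equal 1
      have hβeq : β = 1 := le_antisymm hβ1 (not_lt.mp hβc)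
      have hp1 : ∀ j, p j = 1 := by
        have hnn : ∀ j ∈ Finset.univ, (0:ℝ) ≤ p j - 1 := fun j _ => by linarith [hβle j, hβeq]
        have hsum0 : ∑ j, (p j - 1) = 0 := by
          refine le_antisymm ?_ (Finset.sum_nonneg hnn)
          rw [Finset.sum_sub_distrib]
          simp
          linarith [hppn]
        intro j
        have := (Finset.sum_eq_zero_iff_of_nonneg hnn).mp hsum0 j (mem_univ j)
        linarith
      have hv1 : ∀ i, v i = 1 := by
        intro i
        have hba := twopt_balanced n 1 (j0 i) jβ zero_le_one le_rfl
        have hcost : ∑ j, p j * ((if j = j0 i then (1:ℝ) else 0) + (if j = jβ then 1 - 1 else 0)) ≤ 1 := by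
          rw [twopt_sum n p 1 (j0 i) jβ]
          simp [hp1]
        have hle := (hopt i).2.1 _ hba hcost
        have h3 : util n u i (fun j => (if j = j0 i then (1:ℝ) else 0) + (if j = jβ then 1 - 1 else 0))
            = u i (j0 i) * 1 + u i jβ * (1 - 1) := twopt_sum n (u i) 1 (j0 i) jβ
        rw [h3, hj0u i] at hle
        have := (hv01 x hxfa hxbal i).2
        simp at hle
        exact le_antisymm this hle
      refine ⟨fun i => by rw [hv1 i]; exact one_pos, ?_⟩
      intro z hzf hzb
      calc ∑ i, util n u i (z i) / v i = ∑ i, util n u i (z i) := by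
            refine Finset.sum_congr rfl fun i _ => ?_
            rw [hv1 i, div_one]
        _ ≤ ∑ _i : Fin n, (1:ℝ) := Finset.sum_le_sum fun i _ => (hv01 z hzf hzb i).2
        _ = n := by simp
  obtain ⟨hvpos, hbound⟩ := hmain
  have hxmax : ∀ z, IsFracAssign n z → IsBalanced n z →
      ∏ i, util n u i (z i) ≤ ∏ i, v i := by
    intro z hzf hzb
    have h1 := prod_le_one_of_sum_le' n hn (fun i => util n u i (z i) / v i)
      (fun i => div_nonneg (hv01 z hzf hzb i).1 (hvpos i).le) (hbound z hzf hzb)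
    calc ∏ i, util n u i (z i) = (∏ i, util n u i (z i) / v i) * ∏ i, v i := by
          rw [← Finset.prod_mul_distrib]
          exact Finset.prod_congr rfl fun i _ => (div_mul_cancel₀ _ (ne_of_gt (hvpos i))).symm
      _ ≤ 1 * ∏ i, v i := mul_le_mul_of_nonneg_right h1
          (Finset.prod_nonneg fun i _ => (hvpos i).le)
      _ = ∏ i, v i := one_mul _
  set w : Fin n → ℝ := fun i => util n u i (y i) with hwdef
  have hprodeq : ∏ i, v i = ∏ i, w i := le_antisymm (hymax x hxfa hxbal) (hxmax y hyfa hybal)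
  have hwpos : ∀ i, 0 < w i := by
    intro i
    have h0 : 0 ≤ w i := (hv01 y hyfa hybal i).1
    rcases lt_or_eq_of_le h0 with h | h
    · exact h
    · exfalso
      have hz0 : ∏ i, w i = 0 := Finset.prod_eq_zero (mem_univ i) h.symm
      have hp : 0 < ∏ i, v i := Finset.prod_pos fun i _ => hvpos i
      rw [hprodeq] at hp
      linarith
  intro i0
  show v i0 = w i0
  by_contra hne
  set m : Fin n → Fin n → ℝ := fun i j => (x i j + y i j) / 2 with hmdef
  have hmf : IsFracAssign n m := by
    refine ⟨fun i j => ⟨?_, ?_⟩, fun j => ?_⟩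
    · have h1 := (hxfa.1 i j).1; have h2 := (hyfa.1 i j).1
      simp only [hmdef]; linarith
    · have h1 := (hxfa.1 i j).2; have h2 := (hyfa.1 i j).2
      simp only [hmdef]; linarith
    · simp only [hmdef]
      rw [← Finset.sum_div, Finset.sum_add_distrib, hxfa.2 j, hyfa.2 j]
      norm_num
  have hmb : IsBalanced n m := by
    intro i
    simp only [hmdef]
    rw [← Finset.sum_div, Finset.sum_add_distrib, hxbal i, hybal i]
    norm_num
  have hmu : ∀ i, util n u i (m i) = (v i + w i) / 2 := by
    intro i
    have he : ∀ j, u i j * m i j = (u i j * x i j + u i j * y i j) / 2 := fun j => by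
      simp only [hmdef]; ring
    rw [show util n u i (m i) = ∑ j, u i j * m i j from rfl]
    simp_rw [he]
    rw [← Finset.sum_div, Finset.sum_add_distrib]
    rfl
  have hmmax := hymax m hmf hmb
  have hsq : (∏ i, w i) ^ 2 < (∏ i, util n u i (m i)) ^ 2 := by
    have e1 : (∏ i, w i) ^ 2 = ∏ i, v i * w i := by
      rw [sq, Finset.prod_mul_distrib, hprodeq]
    have e2 : (∏ i, util n u i (m i)) ^ 2 = ∏ i, ((v i + w i) / 2) ^ 2 := by
      rw [← Finset.prod_pow]
      exact Finset.prod_congr rfl fun i _ => by rw [hmu i]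
    rw [e1, e2]
    refine Finset.prod_lt_prod (fun i _ => mul_pos (hvpos i) (hwpos i))
      (fun i _ => by nlinarith [sq_nonneg (v i - w i)]) ⟨i0, mem_univ i0, ?_⟩
    have hd : v i0 - w i0 ≠ 0 := sub_ne_zero.mpr hne
    have hd2 : 0 < (v i0 - w i0) ^ 2 := lt_of_le_of_ne (sq_nonneg _) (Ne.symm (pow_ne_zero 2 hd))
    nlinarith
  have hle2 : (∏ i, util n u i (m i)) ^ 2 ≤ (∏ i, w i) ^ 2 := by
    have h0 : 0 ≤ ∏ i, util n u i (m i) :=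
      Finset.prod_nonneg fun i _ => (hv01 m hmf hmb i).1
    exact pow_le_pow_left₀ h0 hmmax 2
  linarith
end

section
/- Under 1-0 utilities (every u_{ij} ∈ {0,1}), a balanced fractional assignment is leximin-optimal among balanced fractional assignments if and only if it maximizes the Nash welfare ∏_i Σ_j u_{ij} x_{ij} among balanced fractional assignments. -/
open Finset

lemma abel_nonneg (c : ℕ → ℝ) :
    ∀ (m : ℕ) (w : ℕ → ℝ), (∀ k < m, 0 ≤ ∑ i ∈ Finset.range (k+1), c i) →
    (∀ i j, i ≤ j → j < m → w j ≤ w i) → (∀ i < m, 0 ≤ w i) →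
    0 ≤ ∑ i ∈ Finset.range m, c i * w i := by
  intro m
  induction m with
  | zero => intro w _ _ _; simp
  | succ p ih =>
    intro w hp hanti hnn
    have key : ∑ i ∈ Finset.range (p+1), c i * w i
        = (∑ i ∈ Finset.range (p+1), c i * (w i - w p)) + (∑ i ∈ Finset.range (p+1), c i) * w p := by
      rw [Finset.sum_mul, ← Finset.sum_add_distrib]
      apply Finset.sum_congr rfl
      intro i _; ring
    rw [key]
    have h2 : 0 ≤ (∑ i ∈ Finset.range (p+1), c i) * w p :=
      mul_nonneg (hp p (Nat.lt_succ_self p)) (hnn p (Nat.lt_succ_self p))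
    have h1 : 0 ≤ ∑ i ∈ Finset.range (p+1), c i * (w i - w p) := by
      rw [Finset.sum_range_succ]
      have : c p * (w p - w p) = 0 := by ring
      rw [this, add_zero]
      apply ih (fun i => w i - w p)
      · intro k hk; exact hp k (hk.trans (Nat.lt_succ_self p))
      · intro i j hij hj; have := hanti i j hij (hj.trans (Nat.lt_succ_self p)); linarith
      · intro i hi
        have := hanti i p (le_of_lt hi) (Nat.lt_succ_self p); linarith
    linarith

lemma sum_Iic_fin {n : ℕ} (f : Fin n → ℝ) (k : Fin n) :
    ∑ i ∈ Finset.Iic k, f i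
      = ∑ m ∈ Finset.range (k.1+1), (fun m => if h : m < n then f ⟨m, h⟩ else 0) m := by
  apply Finset.sum_nbij' (fun (i : Fin n) => (i : ℕ))
      (fun m => if h : m < n then (⟨m, h⟩ : Fin n) else k)
  · intro i hi
    simp only [Finset.mem_Iic] at hi
    simp [Finset.mem_range, Nat.lt_succ_iff, hi]
  · intro m hm
    simp only [Finset.mem_range, Nat.lt_succ_iff] at hm
    have hmn : m < n := lt_of_le_of_lt hm k.isLt
    simp [hmn, Finset.mem_Iic, Fin.le_def, hm]
  · intro i _; simp [i.isLt]
  · intro m hm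
    simp only [Finset.mem_range, Nat.lt_succ_iff] at hm
    have hmn : m < n := lt_of_le_of_lt hm k.isLt
    simp [hmn]
  · intro i _; simp [i.isLt]

lemma prod_facts_of_prefix_dom {n : ℕ} {a b : Fin n → ℝ}
    (ha0 : ∀ i, 0 ≤ a i) (hb0 : ∀ i, 0 < b i) (hbm : Monotone b)
    (hdom : ∀ k : Fin n, ∑ i ∈ Finset.Iic k, a i ≤ ∑ i ∈ Finset.Iic k, b i) :
    (∏ i, a i ≤ ∏ i, b i) ∧ (∏ i, b i ≤ ∏ i, a i → a = b) := by
  classical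
  have hbprod : 0 < ∏ i, b i := Finset.prod_pos (fun i _ => hb0 i)
  set C : ℕ → ℝ := fun m => if h : m < n then b ⟨m, h⟩ - a ⟨m, h⟩ else 0 with hC
  set W : ℕ → ℝ := fun m => if h : m < n then (b ⟨m, h⟩)⁻¹ else 0 with hW
  have habel : 0 ≤ ∑ i : Fin n, (b i - a i) * (b i)⁻¹ := by
    have h1 : 0 ≤ ∑ m ∈ Finset.range n, C m * W m := by
      apply abel_nonneg C n W
      · intro k hk
        have hb := sum_Iic_fin (fun i => b i - a i) ⟨k, hk⟩
        simp only at hb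
        rw [hC]
        rw [← hb, Finset.sum_sub_distrib]
        have := hdom ⟨k, hk⟩
        linarith
      · intro i j hij hj
        have hi : i < n := lt_of_le_of_lt hij hj
        rw [hW]
        simp only [hi, hj, dif_pos]
        have hble : b ⟨i, hi⟩ ≤ b ⟨j, hj⟩ := hbm (by exact Fin.mk_le_mk.2 hij)
        exact inv_anti₀ (hb0 _) hble
      · intro i hi
        rw [hW]; simp only [hi, dif_pos]
        exact le_of_lt (inv_pos.2 (hb0 _))
    calc (0:ℝ) ≤ ∑ m ∈ Finset.range n, C m * W m := h1
      _ = ∑ i : Fin n, (b i - a i) * (b i)⁻¹ := by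
          rw [← Fin.sum_univ_eq_sum_range (fun m => C m * W m) n]
          apply Finset.sum_congr rfl
          intro i _
          simp [hC, hW, i.isLt]
  by_cases hz : ∃ i, a i = 0
  · obtain ⟨i0, hi0⟩ := hz
    have : ∏ i, a i = 0 := Finset.prod_eq_zero (Finset.mem_univ i0) hi0
    refine ⟨by rw [this]; exact le_of_lt hbprod, fun h => absurd (h.trans_eq this) (not_le.2 hbprod)⟩
  · push_neg at hz
    have ha0' : ∀ i, 0 < a i := fun i => lt_of_le_of_ne (ha0 i) (Ne.symm (hz i))
    have h3 : ∀ i : Fin n, a i / b i - 1 = (a i - b i) * (b i)⁻¹ := by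
      intro i
      rw [← div_eq_mul_inv, sub_div, div_self (ne_of_gt (hb0 i))]
    have hpt : ∀ i : Fin n, Real.log (a i) - Real.log (b i) ≤ (a i - b i) * (b i)⁻¹ := by
      intro i
      have h1 : Real.log (a i) - Real.log (b i) = Real.log (a i / b i) :=
        (Real.log_div (ne_of_gt (ha0' i)) (ne_of_gt (hb0 i))).symm
      have h2 : Real.log (a i / b i) ≤ a i / b i - 1 :=
        Real.log_le_sub_one_of_pos (div_pos (ha0' i) (hb0 i))
      rw [h1, ← h3 i]; exact h2
    have hS : ∑ i : Fin n, (a i - b i) * (b i)⁻¹ = - ∑ i : Fin n, (b i - a i) * (b i)⁻¹ := by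
      rw [← Finset.sum_neg_distrib]
      apply Finset.sum_congr rfl; intro i _; ring
    have hSle : ∑ i : Fin n, (a i - b i) * (b i)⁻¹ ≤ 0 := by rw [hS]; linarith
    have hsumlog : ∑ i, (Real.log (a i) - Real.log (b i)) ≤ 0 := by
      have := Finset.sum_le_sum (fun i (_ : i ∈ Finset.univ) => hpt i)
      linarith
    have hloga : ∑ i, Real.log (a i) ≤ ∑ i, Real.log (b i) := by
      rw [Finset.sum_sub_distrib] at hsumlog; linarith
    have hexpand : ∀ (f : Fin n → ℝ), (∀ i, 0 < f i) →
        Real.log (∏ i, f i) = ∑ i, Real.log (f i) := by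
      intro f hf
      exact Real.log_prod (fun i _ => ne_of_gt (hf i))
    have haprod : 0 < ∏ i, a i := Finset.prod_pos (fun i _ => ha0' i)
    have hP1 : ∏ i, a i ≤ ∏ i, b i := by
      have := Real.log_le_log_iff haprod hbprod
      rw [hexpand a ha0', hexpand b hb0] at this
      exact this.1 hloga
    refine ⟨hP1, fun hpe => ?_⟩
    have hlogb : ∑ i, Real.log (b i) ≤ ∑ i, Real.log (a i) := by
      have := Real.log_le_log_iff hbprod haprod
      rw [hexpand a ha0', hexpand b hb0] at this
      exact this.2 hpe
    have hsum0 : ∑ i, (Real.log (a i) - Real.log (b i)) = 0 := by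
      rw [Finset.sum_sub_distrib]; linarith
    have hSge : 0 ≤ ∑ i : Fin n, (a i - b i) * (b i)⁻¹ := by
      calc (0:ℝ) = ∑ i, (Real.log (a i) - Real.log (b i)) := hsum0.symm
        _ ≤ _ := Finset.sum_le_sum (fun i _ => hpt i)
    have hS0 : ∑ i : Fin n, (a i - b i) * (b i)⁻¹ = 0 := le_antisymm hSle hSge
    have hg0 : ∑ i, ((a i - b i) * (b i)⁻¹ - (Real.log (a i) - Real.log (b i))) = 0 := by
      rw [Finset.sum_sub_distrib, hsum0, sub_zero]; exact hS0
    have hptnn : ∀ i ∈ Finset.univ, 0 ≤ (a i - b i) * (b i)⁻¹ - (Real.log (a i) - Real.log (b i)) :=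
      fun i _ => by linarith [hpt i]
    have hall := (Finset.sum_eq_zero_iff_of_nonneg hptnn).1 hg0
    funext i
    by_contra hne
    have hd1 : a i / b i ≠ 1 := by
      intro h
      exact hne ((div_eq_one_iff_eq (ne_of_gt (hb0 i))).1 h)
    have hstrict : Real.log (a i / b i) < a i / b i - 1 :=
      Real.log_lt_sub_one_of_pos (div_pos (ha0' i) (hb0 i)) hd1
    have h1 : Real.log (a i) - Real.log (b i) = Real.log (a i / b i) :=
      (Real.log_div (ne_of_gt (ha0' i)) (ne_of_gt (hb0 i))).symm
    have := hall i (Finset.mem_univ i)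
    rw [sub_eq_zero] at this
    rw [← h3 i, h1] at this
    linarith

lemma hbin_nonneg {n : ℕ} {u : Fin n → Fin n → ℝ} (hbin : ∀ i j, u i j = 0 ∨ u i j = 1)
    (i j : Fin n) : 0 ≤ u i j := by rcases hbin i j with h | h <;> rw [h] <;> norm_num

lemma hbin_le_one {n : ℕ} {u : Fin n → Fin n → ℝ} (hbin : ∀ i j, u i j = 0 ∨ u i j = 1)
    (i j : Fin n) : u i j ≤ 1 := by rcases hbin i j with h | h <;> rw [h] <;> norm_num

lemma util_nonneg {n : ℕ} {u : Fin n → Fin n → ℝ} (hbin : ∀ i j, u i j = 0 ∨ u i j = 1)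
    {z : Fin n → Fin n → ℝ} (hz : IsFracAssign n z) (i : Fin n) : 0 ≤ util n u i (z i) :=
  Finset.sum_nonneg fun j _ => mul_nonneg (hbin_nonneg hbin i j) (hz.1 i j).1

lemma util_le_one {n : ℕ} {u : Fin n → Fin n → ℝ} (hbin : ∀ i j, u i j = 0 ∨ u i j = 1)
    {z : Fin n → Fin n → ℝ} (hz : IsFracAssign n z) (hzb : IsBalanced n z) (i : Fin n) :
    util n u i (z i) ≤ 1 := by
  calc util n u i (z i) ≤ ∑ j, z i j :=
        Finset.sum_le_sum fun j _ =>
          mul_le_of_le_one_left (hz.1 i j).1 (hbin_le_one hbin i j)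
    _ = 1 := hzb i

lemma exists_nash_max (n : ℕ) (u : Fin n → Fin n → ℝ) :
    ∃ xs, (IsFracAssign n xs ∧ IsBalanced n xs) ∧
      ∀ z, IsFracAssign n z → IsBalanced n z →
        ∏ i, util n u i (z i) ≤ ∏ i, util n u i (xs i) := by
  classical
  set S : Set (Fin n → Fin n → ℝ) := {y | IsFracAssign n y ∧ IsBalanced n y} with hS
  have hev : ∀ (i j : Fin n), Continuous fun y : Fin n → Fin n → ℝ => y i j :=
    fun i j => (continuous_apply j).comp (continuous_apply i)
  have hFcont : Continuous fun y : Fin n → Fin n → ℝ => ∏ i, util n u i (y i) := by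
    apply continuous_finset_prod
    intro i _
    unfold util
    exact continuous_finset_sum _ fun j _ => continuous_const.mul (hev i j)
  have hclosed : IsClosed S := by
    have hSeq : S = (⋂ i, ⋂ j, {y : Fin n → Fin n → ℝ | 0 ≤ y i j ∧ y i j ≤ 1}) ∩
        ((⋂ j, {y : Fin n → Fin n → ℝ | ∑ i, y i j = 1}) ∩
         (⋂ i, {y : Fin n → Fin n → ℝ | ∑ j, y i j = 1})) := by
      ext y
      simp only [hS, Set.mem_setOf_eq, Set.mem_inter_iff, Set.mem_iInter, IsFracAssign,
        IsBalanced]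
      tauto
    rw [hSeq]
    refine IsClosed.inter (isClosed_iInter fun i => isClosed_iInter fun j => ?_)
      (IsClosed.inter (isClosed_iInter fun j => ?_) (isClosed_iInter fun i => ?_))
    · exact IsClosed.inter (isClosed_le continuous_const (hev i j))
        (isClosed_le (hev i j) continuous_const)
    · exact isClosed_eq (continuous_finset_sum _ fun i _ => hev i j) continuous_const
    · exact isClosed_eq (continuous_finset_sum _ fun j _ => hev i j) continuous_const
  have hcpt : IsCompact S := by
    apply IsCompact.of_isClosed_subset
      (isCompact_univ_pi fun i : Fin n => isCompact_univ_pi fun j : Fin n => isCompact_Icc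
        (a := (0:ℝ)) (b := 1))
      hclosed
    intro y hy
    rw [Set.mem_univ_pi]
    intro i
    rw [Set.mem_univ_pi]
    intro j
    exact ⟨(hy.1.1 i j).1, (hy.1.1 i j).2⟩
  have hne : S.Nonempty := by
    refine ⟨fun i j => if i = j then 1 else 0, ⟨⟨fun i j => ?_, fun j => ?_⟩, fun i => ?_⟩⟩
    · simp only []
      constructor <;> [skip; skip] <;> (first | (split <;> norm_num))
    · simp
    · simp
  obtain ⟨xs, hxsS, hmax⟩ := hcpt.exists_isMaxOn hne hFcont.continuousOn
  exact ⟨xs, hxsS, fun z hz1 hz2 => hmax (Set.mem_setOf_eq ▸ ⟨hz1, hz2⟩)⟩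

lemma nash_max_pos {n : ℕ} {u : Fin n → Fin n → ℝ} (hn : 0 < n)
    (hbin : ∀ i j, u i j = 0 ∨ u i j = 1) (hrow : ∀ i, ∃ j, 0 < u i j)
    {xs : Fin n → Fin n → ℝ} (hxs : IsFracAssign n xs ∧ IsBalanced n xs)
    (hmax : ∀ z, IsFracAssign n z → IsBalanced n z →
      ∏ i, util n u i (z i) ≤ ∏ i, util n u i (xs i)) :
    ∀ i, 0 < util n u i (xs i) := by
  classical
  -- pick a liked item for each agent
  have hj : ∀ i, ∃ jj, u i jj = 1 := by
    intro i
    obtain ⟨jj, hjj⟩ := hrow i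
    exact ⟨jj, (hbin i jj).resolve_left (by linarith)⟩
  choose jv hjv using hj
  set σ : Fin n → Equiv.Perm (Fin n) := fun i => Equiv.swap i (jv i) with hσ
  set xbar : Fin n → Fin n → ℝ := fun k l => (∑ i, if (σ i) k = l then (1:ℝ) else 0) / n
    with hxbar
  have hnn : (0:ℝ) < n := by exact_mod_cast hn
  have hxbar_nonneg : ∀ k l, 0 ≤ xbar k l := by
    intro k l
    apply div_nonneg _ (le_of_lt hnn)
    apply Finset.sum_nonneg
    intro i _; split <;> norm_num
  have hxbar_le : ∀ k l, xbar k l ≤ 1 := by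
    intro k l
    rw [hxbar, div_le_one hnn]
    calc (∑ i, if (σ i) k = l then (1:ℝ) else 0) ≤ ∑ _i : Fin n, (1:ℝ) := by
          apply Finset.sum_le_sum; intro i _; split <;> norm_num
      _ = n := by simp
  have hxbar_row : ∀ k, ∑ l, xbar k l = 1 := by
    intro k
    rw [hxbar]
    simp only
    rw [← Finset.sum_div]
    rw [Finset.sum_comm]
    have : ∀ i : Fin n, ∑ l, (if (σ i) k = l then (1:ℝ) else 0) = 1 := by
      intro i
      rw [Finset.sum_ite_eq]
      simp
    rw [Finset.sum_congr rfl fun i _ => this i]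
    simp [div_self (ne_of_gt hnn)]
  have hxbar_col : ∀ l, ∑ k, xbar k l = 1 := by
    intro l
    rw [hxbar]
    simp only
    rw [← Finset.sum_div]
    rw [Finset.sum_comm]
    have : ∀ i : Fin n, ∑ k, (if (σ i) k = l then (1:ℝ) else 0) = 1 := by
      intro i
      have heq : ∑ k, (if (σ i) k = l then (1:ℝ) else 0)
          = ∑ k, (if k = l then (1:ℝ) else 0) :=
        Equiv.sum_comp (σ i) (fun k => if k = l then (1:ℝ) else 0)
      rw [heq, Finset.sum_ite_eq']
      simp
    rw [Finset.sum_congr rfl fun i _ => this i]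
    simp [div_self (ne_of_gt hnn)]
  have hxbarS : IsFracAssign n xbar ∧ IsBalanced n xbar :=
    ⟨⟨fun i j => ⟨hxbar_nonneg i j, hxbar_le i j⟩, hxbar_col⟩, hxbar_row⟩
  have hub : ∀ i, (n:ℝ)⁻¹ ≤ util n u i (xbar i) := by
    intro i
    have hN : (1:ℝ) ≤ ∑ i' : Fin n, (if (σ i') i = jv i then (1:ℝ) else 0) := by
      have := Finset.single_le_sum (f := fun i' : Fin n => if (σ i') i = jv i then (1:ℝ) else 0)
        (fun i' _ => by split <;> norm_num) (Finset.mem_univ i)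
      simpa [hσ, Equiv.swap_apply_left] using this
    have h1 : (1:ℝ)/n ≤ xbar i (jv i) := by
      have hre : xbar i (jv i)
          = (∑ i' : Fin n, if (σ i') i = jv i then (1:ℝ) else 0) / n := rfl
      rw [hre]
      gcongr
    have h2 : xbar i (jv i) ≤ util n u i (xbar i) := by
      have := Finset.single_le_sum (f := fun l => u i l * xbar i l)
        (fun l _ => mul_nonneg (hbin_nonneg hbin i l) (hxbar_nonneg i l)) (Finset.mem_univ (jv i))
      rw [hjv i, one_mul] at this
      unfold util
      exact this
    calc (n:ℝ)⁻¹ = 1/n := (one_div _).symm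
      _ ≤ xbar i (jv i) := h1
      _ ≤ _ := h2
  have hprodpos : 0 < ∏ i, util n u i (xbar i) :=
    Finset.prod_pos fun i _ => lt_of_lt_of_le (inv_pos.2 hnn) (hub i)
  have hxs_pos : 0 < ∏ i, util n u i (xs i) :=
    lt_of_lt_of_le hprodpos (hmax xbar hxbarS.1 hxbarS.2)
  intro i
  rcases (util_nonneg hbin hxs.1 i).lt_or_eq with h | h
  · exact h
  · exfalso
    have : ∏ i, util n u i (xs i) = 0 := Finset.prod_eq_zero (Finset.mem_univ i) h.symm
    rw [this] at hxs_pos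
    exact lt_irrefl _ hxs_pos

def Adir {n : ℕ} (j j2 : Fin n) : Fin n → ℝ :=
  fun l => if l = j then 1 else if l = j2 then -1 else 0

def cdir {n : ℕ} (a b j j2 : Fin n) : Fin n → Fin n → ℝ :=
  fun i l => (if i = a then Adir j j2 l else 0) - (if i = b then Adir j j2 l else 0)

lemma Adir_j {n : ℕ} {j j2 : Fin n} : Adir j j2 j = 1 := by simp [Adir]

lemma Adir_j2 {n : ℕ} {j j2 : Fin n} (hjj : j ≠ j2) : Adir j j2 j2 = -1 := by
  simp [Adir, Ne.symm hjj]

lemma Adir_other {n : ℕ} {j j2 l : Fin n} (h1 : l ≠ j) (h2 : l ≠ j2) : Adir j j2 l = 0 := by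
  simp [Adir, h1, h2]

lemma Adir_sum {n : ℕ} {j j2 : Fin n} (hjj : j ≠ j2) : ∑ l, Adir j j2 l = 0 := by
  classical
  have hsplit : ∀ l : Fin n, Adir j j2 l
      = (if l = j then (1:ℝ) else 0) + (if l = j2 then (-1:ℝ) else 0) := by
    intro l
    by_cases h1 : l = j
    · rw [h1, Adir_j, if_pos rfl, if_neg hjj]; norm_num
    · by_cases h2 : l = j2
      · rw [h2, Adir_j2 hjj, if_neg (Ne.symm hjj), if_pos rfl]; norm_num
      · rw [Adir_other h1 h2, if_neg h1, if_neg h2]; norm_num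
  rw [Finset.sum_congr rfl fun l _ => hsplit l, Finset.sum_add_distrib,
    Finset.sum_ite_eq' Finset.univ j (fun _ => (1:ℝ)),
    Finset.sum_ite_eq' Finset.univ j2 (fun _ => (-1:ℝ))]
  simp

lemma Adir_wsum {n : ℕ} {j j2 : Fin n} (hjj : j ≠ j2) (v : Fin n → ℝ) :
    ∑ l, v l * Adir j j2 l = v j - v j2 := by
  classical
  have hptw : ∀ l, v l * Adir j j2 l
      = (if l = j then v l else 0) + (if l = j2 then -v l else 0) := by
    intro l
    by_cases h1 : l = j
    · rw [h1, Adir_j, if_pos rfl, if_neg hjj]; ring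
    · by_cases h2 : l = j2
      · rw [h2, Adir_j2 hjj, if_neg (Ne.symm hjj), if_pos rfl]; ring
      · rw [Adir_other h1 h2, if_neg h1, if_neg h2]; ring
  rw [Finset.sum_congr rfl fun l _ => hptw l, Finset.sum_add_distrib,
    Finset.sum_ite_eq' Finset.univ j (fun l => v l),
    Finset.sum_ite_eq' Finset.univ j2 (fun l => -v l)]
  simp
  ring

lemma cdir_rowsum {n : ℕ} {a b j j2 : Fin n} (hjj : j ≠ j2) (i : Fin n) :
    ∑ l, cdir a b j j2 i l = 0 := by
  classical
  unfold cdir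
  rw [Finset.sum_sub_distrib]
  by_cases h1 : i = a <;> by_cases h2 : i = b <;> simp [h1, h2, Adir_sum hjj]

lemma cdir_colsum {n : ℕ} {a b j j2 : Fin n} (l : Fin n) : ∑ i, cdir a b j j2 i l = 0 := by
  classical
  unfold cdir
  rw [Finset.sum_sub_distrib, Finset.sum_ite_eq' Finset.univ a (fun _ => Adir j j2 l),
    Finset.sum_ite_eq' Finset.univ b (fun _ => Adir j j2 l)]
  simp

lemma key_exchange {n : ℕ} {u : Fin n → Fin n → ℝ}
    (hbin : ∀ i j, u i j = 0 ∨ u i j = 1)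
    {xs : Fin n → Fin n → ℝ} (hxs : IsFracAssign n xs ∧ IsBalanced n xs)
    (hmax : ∀ z, IsFracAssign n z → IsBalanced n z →
      ∏ i, util n u i (z i) ≤ ∏ i, util n u i (xs i))
    (hpos : ∀ i, 0 < util n u i (xs i))
    {a b j j2 : Fin n} (hab : a ≠ b) (hjj : j ≠ j2)
    (huaj : u a j = 1) (huaj2 : u a j2 = 0)
    (hbj : 0 < xs b j) (haj2 : 0 < xs a j2) :
    u b j = 1 ∧ util n u b (xs b) ≤ util n u a (xs a) := by
  classical
  set t : Fin n → ℝ := fun i => util n u i (xs i) with ht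
  set wb : ℝ := u b j2 - u b j with hwbdef
  set w : Fin n → ℝ := fun i => (if i = a then (1:ℝ) else 0) - (if i = b then -wb else 0) with hw
  have hiba : ∀ i : Fin n, i = a → i ≠ b := fun i h => h ▸ hab
  -- utility of perturbed matrix
  have hwutil : ∀ (δ : ℝ) (i), util n u i (fun l => xs i l + δ * cdir a b j j2 i l)
      = t i + δ * w i := by
    intro δ i
    show ∑ l, u i l * (xs i l + δ * cdir a b j j2 i l) = t i + δ * w i
    have hsp : ∀ l, u i l * (xs i l + δ * cdir a b j j2 i l)
        = u i l * xs i l + δ * (u i l * cdir a b j j2 i l) := by intro l; ring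
    rw [Finset.sum_congr rfl fun l _ => hsp l, Finset.sum_add_distrib, ← Finset.mul_sum]
    have hsc : ∑ l, u i l * cdir a b j j2 i l = w i := by
      unfold cdir
      have hpt : ∀ l, u i l * ((if i = a then Adir j j2 l else 0) - (if i = b then Adir j j2 l else 0))
          = (if i = a then u i l * Adir j j2 l else 0)
            - (if i = b then u i l * Adir j j2 l else 0) := by
        intro l
        by_cases h1 : i = a
        · rw [if_pos h1, if_pos h1, if_neg (hiba i h1), if_neg (hiba i h1)]; ring
        · by_cases h2 : i = b
          · rw [if_neg h1, if_neg h1, if_pos h2, if_pos h2]; ring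
          · rw [if_neg h1, if_neg h1, if_neg h2, if_neg h2]; ring
      rw [Finset.sum_congr rfl fun l _ => hpt l, Finset.sum_sub_distrib]
      have e1 : ∑ l, (if i = a then u i l * Adir j j2 l else 0)
          = if i = a then u i j - u i j2 else 0 := by
        by_cases h1 : i = a <;> simp [h1, Adir_wsum hjj]
      have e2 : ∑ l, (if i = b then u i l * Adir j j2 l else 0)
          = if i = b then u i j - u i j2 else 0 := by
        by_cases h2 : i = b <;> simp [h2, Adir_wsum hjj]
      have hwi : w i = (if i = a then (1:ℝ) else 0) - (if i = b then -wb else 0) := rfl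
      rw [e1, e2, hwi]
      by_cases h1 : i = a
      · rw [if_pos h1, if_pos h1, if_neg (hiba i h1), if_neg (hiba i h1), h1, huaj, huaj2]
        try norm_num
      · by_cases h2 : i = b
        · rw [if_neg h1, if_neg h1, if_pos h2, if_pos h2, h2, hwbdef]
          try ring
        · rw [if_neg h1, if_neg h1, if_neg h2, if_neg h2]
          try ring
    rw [hsc]
    rfl
  -- strict room bounds
  have hxaj1 : xs a j < 1 := by
    have hpair : xs a j + xs b j ≤ ∑ i, xs i j := by
      have := Finset.sum_le_sum_of_subset_of_nonneg
        (Finset.subset_univ ({a, b} : Finset (Fin n))) (fun i _ _ => (hxs.1.1 i j).1)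
      rwa [Finset.sum_pair hab] at this
    have := hxs.1.2 j
    linarith
  have hxbj21 : xs b j2 < 1 := by
    have hpair : xs b j + xs b j2 ≤ ∑ l, xs b l := by
      have := Finset.sum_le_sum_of_subset_of_nonneg
        (Finset.subset_univ ({j, j2} : Finset (Fin n))) (fun l _ _ => (hxs.1.1 b l).1)
      rwa [Finset.sum_pair hjj] at this
    have := hxs.2 b
    linarith
  have hδ0pos : 0 < min (min (xs b j) (xs a j2)) (min (1 - xs a j) (1 - xs b j2)) :=
    lt_min (lt_min hbj haj2) (lt_min (by linarith) (by linarith))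
  -- feasibility of the perturbation
  have hfeas : ∀ δ : ℝ, 0 < δ → δ ≤ min (min (xs b j) (xs a j2)) (min (1 - xs a j) (1 - xs b j2)) →
      IsFracAssign n (fun i l => xs i l + δ * cdir a b j j2 i l) ∧
      IsBalanced n (fun i l => xs i l + δ * cdir a b j j2 i l) := by
    intro δ hδp hδle
    have hd1 : δ ≤ xs b j := le_trans hδle (le_trans (min_le_left _ _) (min_le_left _ _))
    have hd2 : δ ≤ xs a j2 := le_trans hδle (le_trans (min_le_left _ _) (min_le_right _ _))
    have hd3 : δ ≤ 1 - xs a j := le_trans hδle (le_trans (min_le_right _ _) (min_le_left _ _))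
    have hd4 : δ ≤ 1 - xs b j2 := le_trans hδle (le_trans (min_le_right _ _) (min_le_right _ _))
    refine ⟨⟨fun i l => ?_, fun l => ?_⟩, fun i => ?_⟩
    · dsimp only
      by_cases h1 : i = a
      · rw [h1]
        by_cases hl1 : l = j
        · rw [hl1]
          have hval : cdir a b j j2 a j = 1 := by
            unfold cdir
            rw [if_pos rfl, if_neg hab, Adir_j]
            ring
          rw [hval]
          have h01 := hxs.1.1 a j
          constructor <;> linarith
        · by_cases hl2 : l = j2
          · rw [hl2]
            have hval : cdir a b j j2 a j2 = -1 := by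
              unfold cdir
              rw [if_pos rfl, if_neg hab, Adir_j2 hjj]
              ring
            rw [hval]
            have h01 := hxs.1.1 a j2
            constructor <;> linarith
          · have hval : cdir a b j j2 a l = 0 := by
              unfold cdir
              rw [if_pos rfl, if_neg hab, Adir_other hl1 hl2]
              ring
            rw [hval]
            have h01 := hxs.1.1 a l
            constructor <;> linarith
      · by_cases h2 : i = b
        · rw [h2]
          by_cases hl1 : l = j
          · rw [hl1]
            have hval : cdir a b j j2 b j = -1 := by
              unfold cdir
              rw [if_neg (Ne.symm hab), if_pos rfl, Adir_j]
              ring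
            rw [hval]
            have h01 := hxs.1.1 b j
            constructor <;> linarith
          · by_cases hl2 : l = j2
            · rw [hl2]
              have hval : cdir a b j j2 b j2 = 1 := by
                unfold cdir
                rw [if_neg (Ne.symm hab), if_pos rfl, Adir_j2 hjj]
                ring
              rw [hval]
              have h01 := hxs.1.1 b j2
              constructor <;> linarith
            · have hval : cdir a b j j2 b l = 0 := by
                unfold cdir
                rw [if_neg (Ne.symm hab), if_pos rfl, Adir_other hl1 hl2]
                ring
              rw [hval]
              have h01 := hxs.1.1 b l
              constructor <;> linarith
        · have hval : cdir a b j j2 i l = 0 := by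
            unfold cdir
            rw [if_neg h1, if_neg h2]
            ring
          rw [hval]
          have h01 := hxs.1.1 i l
          constructor <;> linarith
    · dsimp only
      rw [Finset.sum_add_distrib, ← Finset.mul_sum, cdir_colsum l, hxs.1.2 l]
      ring
    · dsimp only
      rw [Finset.sum_add_distrib, ← Finset.mul_sum, cdir_rowsum hjj i, hxs.2 i]
      ring
  -- the pairwise inequality from optimality
  have hPpos : 0 < ∏ i ∈ (Finset.univ.erase a).erase b, t i :=
    Finset.prod_pos fun i _ => hpos i
  have hkey : ∀ δ : ℝ, 0 < δ →
      δ ≤ min (min (xs b j) (xs a j2)) (min (1 - xs a j) (1 - xs b j2)) →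
      (t a + δ) * (t b + δ * wb) ≤ t a * t b := by
    intro δ hδp hδle
    have hfa := hfeas δ hδp hδle
    have hm := hmax _ hfa.1 hfa.2
    rw [Finset.prod_congr rfl fun i _ => hwutil δ i] at hm
    have hbmem : b ∈ Finset.univ.erase a := Finset.mem_erase.2 ⟨Ne.symm hab, Finset.mem_univ b⟩
    have fact : ∀ (f : Fin n → ℝ), ∏ i, f i
        = f a * (f b * ∏ i ∈ (Finset.univ.erase a).erase b, f i) := by
      intro f
      rw [← Finset.mul_prod_erase Finset.univ f (Finset.mem_univ a),
        ← Finset.mul_prod_erase (Finset.univ.erase a) f hbmem]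
    rw [fact (fun i => t i + δ * w i), fact t] at hm
    have hsame : ∏ i ∈ (Finset.univ.erase a).erase b, (t i + δ * w i)
        = ∏ i ∈ (Finset.univ.erase a).erase b, t i := by
      apply Finset.prod_congr rfl
      intro i hi
      have hib : i ≠ b := Finset.ne_of_mem_erase hi
      have hia : i ≠ a := Finset.ne_of_mem_erase (Finset.mem_of_mem_erase hi)
      rw [hw]
      simp [hia, hib]
    rw [hsame] at hm
    have hwa : w a = 1 := by rw [hw]; simp [hab]
    have hwb' : w b = wb := by rw [hw]; simp [Ne.symm hab]
    rw [hwa, hwb'] at hm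
    have h2 := (mul_le_mul_iff_left₀ hPpos).1 (by
      calc (t a + δ * 1) * (t b + δ * wb) * ∏ i ∈ (Finset.univ.erase a).erase b, t i
          = (t a + δ * 1) * ((t b + δ * wb) * ∏ i ∈ (Finset.univ.erase a).erase b, t i) := by
            ring
        _ ≤ t a * (t b * ∏ i ∈ (Finset.univ.erase a).erase b, t i) := hm
        _ = t a * t b * ∏ i ∈ (Finset.univ.erase a).erase b, t i := by ring)
    calc (t a + δ) * (t b + δ * wb) = (t a + δ * 1) * (t b + δ * wb) := by ring
      _ ≤ t a * t b := h2
  have hlin : ∀ δ : ℝ, 0 < δ →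
      δ ≤ min (min (xs b j) (xs a j2)) (min (1 - xs a j) (1 - xs b j2)) →
      t b + wb * t a + δ * wb ≤ 0 := by
    intro δ hδp hδle
    have h := hkey δ hδp hδle
    have h2 : δ * (t b + wb * t a + δ * wb) ≤ δ * 0 := by nlinarith
    exact (mul_le_mul_iff_right₀ hδp).1 h2
  have hta : 0 < t a := hpos a
  have htb : 0 < t b := hpos b
  have hwbneg : wb < 0 := by
    by_contra hge
    push_neg at hge
    have := hlin _ hδ0pos (le_refl _)
    nlinarith
  have hubj : u b j = 1 ∧ u b j2 = 0 := by
    rcases hbin b j with h1 | h1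
    · exfalso
      rcases hbin b j2 with h2 | h2 <;> rw [hwbdef, h1, h2] at hwbneg <;> norm_num at hwbneg
    · rcases hbin b j2 with h2 | h2
      · exact ⟨h1, h2⟩
      · exfalso
        rw [hwbdef, h1, h2] at hwbneg
        norm_num at hwbneg
  have hwbm1 : wb = -1 := by rw [hwbdef, hubj.1, hubj.2]; norm_num
  refine ⟨hubj.1, ?_⟩
  by_contra hltu
  push_neg at hltu
  have hlt : t a < t b := hltu
  have hδ1pos : 0 < min (min (min (xs b j) (xs a j2)) (min (1 - xs a j) (1 - xs b j2)))
      ((t b - t a)/2) := lt_min hδ0pos (by linarith)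
  have hl := hlin _ hδ1pos (min_le_left _ _)
  rw [hwbm1] at hl
  have h2 : min (min (min (xs b j) (xs a j2)) (min (1 - xs a j) (1 - xs b j2))) ((t b - t a)/2)
      ≤ (t b - t a)/2 := min_le_right _ _
  nlinarith

open scoped Classical in
lemma saturation {n : ℕ} {u : Fin n → Fin n → ℝ}
    (hbin : ∀ i j, u i j = 0 ∨ u i j = 1)
    {xs : Fin n → Fin n → ℝ} (hxs : IsFracAssign n xs ∧ IsBalanced n xs)
    (hmax : ∀ z, IsFracAssign n z → IsBalanced n z →
      ∏ i, util n u i (z i) ≤ ∏ i, util n u i (xs i))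
    (hpos : ∀ i, 0 < util n u i (xs i))
    {θ : ℝ} (hθ : θ ≤ 1) {z : Fin n → Fin n → ℝ}
    (hz : IsFracAssign n z) (hzb : IsBalanced n z) :
    ∑ i ∈ Finset.univ.filter (fun i => util n u i (xs i) < θ), util n u i (z i)
      ≤ ∑ i ∈ Finset.univ.filter (fun i => util n u i (xs i) < θ), util n u i (xs i) := by
  set L : Finset (Fin n) := Finset.univ.filter (fun i => util n u i (xs i) < θ) with hL
  set NL : Finset (Fin n) := Finset.univ.filter (fun jj => ∃ a ∈ L, u a jj = 1) with hNL
  -- ownership of columns in NL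
  have hown : ∀ jj ∈ NL, ∀ i, 0 < xs i jj → (u i jj = 1 ∧ i ∈ L) := by
    intro jj hjj i hxi
    rw [hNL, Finset.mem_filter] at hjj
    obtain ⟨-, a, haL, hua⟩ := hjj
    have hta : util n u a (xs a) < θ := (Finset.mem_filter.1 haL).2
    by_cases hia : i = a
    · rw [hia]; exact ⟨hua, haL⟩
    · -- a wastes somewhere
      have hta1 : util n u a (xs a) < 1 := lt_of_lt_of_le hta hθ
      have hwaste : ∃ j2, u a j2 = 0 ∧ 0 < xs a j2 := by
        by_contra hcon
        push_neg at hcon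
        have : util n u a (xs a) = 1 := by
          unfold util
          rw [← hxs.2 a]
          apply Finset.sum_congr rfl
          intro l _
          rcases hbin a l with h0 | h1
          · have hle := hcon l h0
            have hge := (hxs.1.1 a l).1
            have : xs a l = 0 := le_antisymm hle hge
            rw [h0, this]; ring
          · rw [h1, one_mul]
        linarith
      obtain ⟨j2, hj2u, hj2x⟩ := hwaste
      have hjne : jj ≠ j2 := by
        intro h
        rw [h, hj2u] at hua
        norm_num at hua
      have hkey := key_exchange hbin hxs hmax hpos (fun h => hia h.symm) hjne hua hj2u hxi hj2x
      refine ⟨hkey.1, ?_⟩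
      rw [hL, Finset.mem_filter]
      exact ⟨Finset.mem_univ i, lt_of_le_of_lt hkey.2 hta⟩
  -- each NL column is fully eaten by L agents who like it
  have hcol1 : ∀ jj ∈ NL, ∑ i ∈ L, u i jj * xs i jj = 1 := by
    intro jj hjj
    have h1 : ∑ i, u i jj * xs i jj = 1 := by
      rw [← hxs.1.2 jj]
      apply Finset.sum_congr rfl
      intro i _
      rcases (hxs.1.1 i jj).1.lt_or_eq with hlt | heq
      · rw [(hown jj hjj i hlt).1, one_mul]
      · rw [← heq]; ring
    rw [← h1]
    apply Finset.sum_subset (Finset.subset_univ L)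
    intro i _ hiL
    rcases (hxs.1.1 i jj).1.lt_or_eq with hlt | heq
    · exact absurd ((hown jj hjj i hlt).2) hiL
    · rw [← heq]; ring
  -- restriction of utilities to NL columns
  have hrestrict : ∀ (y : Fin n → Fin n → ℝ), ∀ i ∈ L,
      util n u i (y i) = ∑ jj ∈ NL, u i jj * y i jj := by
    intro y i hiL
    unfold util
    symm
    apply Finset.sum_subset (Finset.subset_univ NL)
    intro jj _ hjNL
    have : u i jj = 0 := by
      rcases hbin i jj with h0 | h1
      · exact h0
      · exfalso
        apply hjNL
        rw [hNL, Finset.mem_filter]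
        exact ⟨Finset.mem_univ jj, i, hiL, h1⟩
    rw [this]; ring
  -- compute both sides
  have hT : ∑ i ∈ L, util n u i (xs i) = ∑ jj ∈ NL, (1:ℝ) := by
    rw [Finset.sum_congr rfl (hrestrict xs), Finset.sum_comm]
    exact Finset.sum_congr rfl hcol1
  have hS : ∑ i ∈ L, util n u i (z i) ≤ ∑ jj ∈ NL, (1:ℝ) := by
    rw [Finset.sum_congr rfl (hrestrict z), Finset.sum_comm]
    apply Finset.sum_le_sum
    intro jj _
    calc ∑ i ∈ L, u i jj * z i jj ≤ ∑ i ∈ L, z i jj := by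
          apply Finset.sum_le_sum
          intro i _
          exact mul_le_of_le_one_left (hz.1 i jj).1 (hbin_le_one hbin i jj)
      _ ≤ ∑ i, z i jj := Finset.sum_le_sum_of_subset_of_nonneg (Finset.subset_univ L)
          (fun i _ _ => (hz.1 i jj).1)
      _ = 1 := hz.2 jj
  rw [hT.symm] at hS
  exact hS

open scoped Classical in
lemma diamond {n : ℕ} {u : Fin n → Fin n → ℝ}
    (hbin : ∀ i j, u i j = 0 ∨ u i j = 1)
    {xs : Fin n → Fin n → ℝ} (hxs : IsFracAssign n xs ∧ IsBalanced n xs)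
    (hmax : ∀ z, IsFracAssign n z → IsBalanced n z →
      ∏ i, util n u i (z i) ≤ ∏ i, util n u i (xs i))
    (hpos : ∀ i, 0 < util n u i (xs i))
    {θ : ℝ} (hθ : θ ≤ 1) {z : Fin n → Fin n → ℝ}
    (hz : IsFracAssign n z) (hzb : IsBalanced n z) :
    ∑ i, max (θ - util n u i (xs i)) 0 ≤ ∑ i, max (θ - util n u i (z i)) 0 := by
  set L : Finset (Fin n) := Finset.univ.filter (fun i => util n u i (xs i) < θ) with hLdef
  have hLHS : ∑ i, max (θ - util n u i (xs i)) 0 = ∑ i ∈ L, (θ - util n u i (xs i)) := by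
    rw [← Finset.sum_filter_add_sum_filter_not Finset.univ
      (fun i => util n u i (xs i) < θ) (fun i => max (θ - util n u i (xs i)) 0)]
    have h1 : ∑ i ∈ L, max (θ - util n u i (xs i)) 0 = ∑ i ∈ L, (θ - util n u i (xs i)) := by
      apply Finset.sum_congr rfl
      intro i hi
      have := (Finset.mem_filter.1 hi).2
      exact max_eq_left (by linarith)
    have h2 : ∑ i ∈ Finset.univ.filter (fun i => ¬ util n u i (xs i) < θ),
        max (θ - util n u i (xs i)) 0 = 0 := by
      apply Finset.sum_eq_zero
      intro i hi
      have := (Finset.mem_filter.1 hi).2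
      push_neg at this
      exact max_eq_right (by linarith)
    rw [h1, h2, add_zero]
  have hRHS : ∑ i ∈ L, (θ - util n u i (z i)) ≤ ∑ i, max (θ - util n u i (z i)) 0 := by
    calc ∑ i ∈ L, (θ - util n u i (z i)) ≤ ∑ i ∈ L, max (θ - util n u i (z i)) 0 :=
          Finset.sum_le_sum fun i _ => le_max_left _ _
      _ ≤ ∑ i, max (θ - util n u i (z i)) 0 :=
          Finset.sum_le_sum_of_subset_of_nonneg (Finset.subset_univ L)
            (fun i _ _ => le_max_right _ _)
  have hsat := saturation hbin hxs hmax hpos hθ hz hzb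
  rw [← hLdef] at hsat
  rw [hLHS]
  rw [Finset.sum_sub_distrib] at hRHS ⊢
  linarith

/-- prefix-sum (Lorenz) dominance of the sorted utility vector of the Nash maximizer. -/
lemma prefix_dom {n : ℕ} {u : Fin n → Fin n → ℝ}
    (hbin : ∀ i j, u i j = 0 ∨ u i j = 1)
    {xs : Fin n → Fin n → ℝ} (hxs : IsFracAssign n xs ∧ IsBalanced n xs)
    (hmax : ∀ z, IsFracAssign n z → IsBalanced n z →
      ∏ i, util n u i (z i) ≤ ∏ i, util n u i (xs i))
    (hpos : ∀ i, 0 < util n u i (xs i))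
    {z : Fin n → Fin n → ℝ} (hz : IsFracAssign n z) (hzb : IsBalanced n z)
    (k : Fin n) :
    ∑ i ∈ Finset.Iic k, sortedVec n (fun i => util n u i (z i)) i
      ≤ ∑ i ∈ Finset.Iic k, sortedVec n (fun i => util n u i (xs i)) i := by
  classical
  set s : Fin n → ℝ := fun i => util n u i (z i) with hs
  set t : Fin n → ℝ := fun i => util n u i (xs i) with htdef
  have hamono : Monotone (sortedVec n s) := Tuple.monotone_sort s
  have hbmono : Monotone (sortedVec n t) := Tuple.monotone_sort t
  set θ : ℝ := sortedVec n s k with hθdef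
  have hθ1 : θ ≤ 1 := by
    rw [hθdef]
    exact util_le_one hbin hz hzb (Tuple.sort s k)
  -- E1: equality for the sorted s vector at its own threshold
  have E1 : ∑ i, max (θ - sortedVec n s i) 0 = ∑ i ∈ Finset.Iic k, (θ - sortedVec n s i) := by
    rw [← Finset.sum_add_sum_compl (Finset.Iic k) (fun i => max (θ - sortedVec n s i) 0)]
    have h1 : ∑ i ∈ Finset.Iic k, max (θ - sortedVec n s i) 0
        = ∑ i ∈ Finset.Iic k, (θ - sortedVec n s i) := by
      apply Finset.sum_congr rfl
      intro i hi
      have hik : i ≤ k := Finset.mem_Iic.1 hi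
      have := hamono hik
      exact max_eq_left (by rw [hθdef]; linarith)
    have h2 : ∑ i ∈ (Finset.Iic k)ᶜ, max (θ - sortedVec n s i) 0 = 0 := by
      apply Finset.sum_eq_zero
      intro i hi
      have hik : k < i := by
        have := Finset.mem_compl.1 hi
        rw [Finset.mem_Iic] at this
        exact lt_of_not_ge this
      have := hamono (le_of_lt hik)
      exact max_eq_right (by rw [hθdef]; linarith)
    rw [h1, h2, add_zero]
  -- E2: lower bound for the sorted t vector
  have E2 : ∑ i ∈ Finset.Iic k, (θ - sortedVec n t i) ≤ ∑ i, max (θ - sortedVec n t i) 0 := by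
    calc ∑ i ∈ Finset.Iic k, (θ - sortedVec n t i)
        ≤ ∑ i ∈ Finset.Iic k, max (θ - sortedVec n t i) 0 :=
          Finset.sum_le_sum fun i _ => le_max_left _ _
      _ ≤ ∑ i, max (θ - sortedVec n t i) 0 :=
          Finset.sum_le_sum_of_subset_of_nonneg (Finset.subset_univ _)
            (fun i _ _ => le_max_right _ _)
  -- E3: permutation invariance
  have E3s : ∑ i, max (θ - sortedVec n s i) 0 = ∑ i, max (θ - s i) 0 :=
    Equiv.sum_comp (Tuple.sort s) (fun i => max (θ - s i) 0)
  have E3t : ∑ i, max (θ - sortedVec n t i) 0 = ∑ i, max (θ - t i) 0 :=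
    Equiv.sum_comp (Tuple.sort t) (fun i => max (θ - t i) 0)
  -- diamond
  have hdia : ∑ i, max (θ - t i) 0 ≤ ∑ i, max (θ - s i) 0 :=
    diamond hbin hxs hmax hpos hθ1 hz hzb
  -- assemble
  have hchain : ∑ i ∈ Finset.Iic k, (θ - sortedVec n t i)
      ≤ ∑ i ∈ Finset.Iic k, (θ - sortedVec n s i) := by
    calc ∑ i ∈ Finset.Iic k, (θ - sortedVec n t i)
        ≤ ∑ i, max (θ - sortedVec n t i) 0 := E2
      _ = ∑ i, max (θ - t i) 0 := E3t
      _ ≤ ∑ i, max (θ - s i) 0 := hdia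
      _ = ∑ i, max (θ - sortedVec n s i) 0 := E3s.symm
      _ = ∑ i ∈ Finset.Iic k, (θ - sortedVec n s i) := E1
  rw [Finset.sum_sub_distrib, Finset.sum_sub_distrib] at hchain
  linarith

/-- Under 1-0 utilities, a balanced fractional assignment is
leximin-optimal among balanced fractional assignments iff it maximizes Nash
welfare among balanced fractional assignments. -/
theorem leximin_iff_mnw_balanced_of_binary (n : ℕ) (u : Fin n → Fin n → ℝ)
    (hbin : ∀ i j, u i j = 0 ∨ u i j = 1)
    (hrow : ∀ i, ∃ j, 0 < u i j) (hcol : ∀ j, ∃ i, 0 < u i j)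
    (x : Fin n → Fin n → ℝ)
    (hx : IsFracAssign n x ∧ IsBalanced n x) :
    (∀ z, IsFracAssign n z → IsBalanced n z →
        toLex (sortedVec n (fun i => util n u i (z i))) ≤
          toLex (sortedVec n (fun i => util n u i (x i)))) ↔
    (∀ z, IsFracAssign n z → IsBalanced n z →
        ∏ i, util n u i (z i) ≤ ∏ i, util n u i (x i)) := by
  classical
  obtain ⟨hx1, hx2⟩ := hx
  rcases Nat.eq_zero_or_pos n with hn | hn
  · subst hn
    constructor
    · intro _ z hz1 hz2
      simp
    · intro _ z hz1 hz2
      have : sortedVec 0 (fun i => util 0 u i (z i)) = sortedVec 0 (fun i => util 0 u i (x i)) :=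
        funext fun i => i.elim0
      exact le_of_eq (congrArg toLex this)
  obtain ⟨xs, hxsS, hmax⟩ := exists_nash_max n u
  have hpos := nash_max_pos hn hbin hrow hxsS hmax
  have hprodsort : ∀ v : Fin n → ℝ, ∏ i, sortedVec n v i = ∏ i, v i :=
    fun v => Equiv.prod_comp (Tuple.sort v) v
  -- core claim: sorted utilities of the Nash maximizer lex-dominate everything feasible
  have hcore : ∀ z, IsFracAssign n z → IsBalanced n z →
      toLex (sortedVec n (fun i => util n u i (z i)))
        ≤ toLex (sortedVec n (fun i => util n u i (xs i))) := by
    intro z hz1 hz2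
    by_cases hAB : sortedVec n (fun i => util n u i (z i))
        = sortedVec n (fun i => util n u i (xs i))
    · exact le_of_eq (congrArg toLex hAB)
    · obtain ⟨i0, hi0⟩ := Function.ne_iff.1 hAB
      set S : Finset (Fin n) := Finset.univ.filter
        (fun i => sortedVec n (fun i => util n u i (z i)) i
          ≠ sortedVec n (fun i => util n u i (xs i)) i) with hSdef
      have hSne : S.Nonempty := ⟨i0, Finset.mem_filter.2 ⟨Finset.mem_univ _, hi0⟩⟩
      set k0 := S.min' hSne with hk0def
      have hk0 : sortedVec n (fun i => util n u i (z i)) k0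
          ≠ sortedVec n (fun i => util n u i (xs i)) k0 :=
        (Finset.mem_filter.1 (S.min'_mem hSne)).2
      have hminlt : ∀ i, i < k0 → sortedVec n (fun i => util n u i (z i)) i
          = sortedVec n (fun i => util n u i (xs i)) i := by
        intro i hik
        by_contra hne
        have : k0 ≤ i := S.min'_le i (Finset.mem_filter.2 ⟨Finset.mem_univ _, hne⟩)
        exact absurd hik (not_lt.2 this)
      have hpre := prefix_dom hbin hxsS hmax hpos hz1 hz2 k0
      have hIic : Finset.Iic k0 = insert k0 (Finset.Iio k0) := (Finset.Iio_insert k0).symm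
      have hnotmem : k0 ∉ Finset.Iio k0 := by simp
      rw [hIic, Finset.sum_insert hnotmem, Finset.sum_insert hnotmem] at hpre
      have hsame : ∑ i ∈ Finset.Iio k0, sortedVec n (fun i => util n u i (z i)) i
          = ∑ i ∈ Finset.Iio k0, sortedVec n (fun i => util n u i (xs i)) i :=
        Finset.sum_congr rfl fun i hi => hminlt i (Finset.mem_Iio.1 hi)
      have hlt : sortedVec n (fun i => util n u i (z i)) k0
          < sortedVec n (fun i => util n u i (xs i)) k0 :=
        lt_of_le_of_ne (by linarith) hk0
      exact le_of_lt ⟨k0, fun jj hj => hminlt jj hj, hlt⟩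
  -- positivity and monotonicity of sorted maximizer utilities
  have hb0 : ∀ i, 0 < sortedVec n (fun i => util n u i (xs i)) i :=
    fun i => hpos (Tuple.sort (fun i => util n u i (xs i)) i)
  have hbm : Monotone (sortedVec n (fun i => util n u i (xs i))) :=
    Tuple.monotone_sort _
  constructor
  · -- leximin optimal → Nash optimal
    intro hlex z hz1 hz2
    have h1 := hlex xs hxsS.1 hxsS.2
    have h2 := hcore x hx1 hx2
    have heq : sortedVec n (fun i => util n u i (x i))
        = sortedVec n (fun i => util n u i (xs i)) :=
      toLex.injective (le_antisymm h2 h1)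
    calc ∏ i, util n u i (z i) ≤ ∏ i, util n u i (xs i) := hmax z hz1 hz2
      _ = ∏ i, sortedVec n (fun i => util n u i (xs i)) i := (hprodsort _).symm
      _ = ∏ i, sortedVec n (fun i => util n u i (x i)) i := by rw [heq]
      _ = ∏ i, util n u i (x i) := hprodsort _
  · -- Nash optimal → leximin optimal
    intro hprod z hz1 hz2
    have hx_e : ∏ i, util n u i (x i) = ∏ i, util n u i (xs i) :=
      le_antisymm (hmax x hx1 hx2) (hprod xs hxsS.1 hxsS.2)
    have ha0 : ∀ i, 0 ≤ sortedVec n (fun i => util n u i (x i)) i :=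
      fun i => util_nonneg hbin hx1 (Tuple.sort (fun i => util n u i (x i)) i)
    have hfacts := prod_facts_of_prefix_dom ha0 hb0 hbm
      (fun k => prefix_dom hbin hxsS hmax hpos hx1 hx2 k)
    have heq : sortedVec n (fun i => util n u i (x i))
        = sortedVec n (fun i => util n u i (xs i)) := by
      apply hfacts.2
      rw [hprodsort, hprodsort, hx_e]
    exact le_of_le_of_eq (hcore z hz1 hz2) (congrArg toLex heq.symm)
end

section
/- Under 1-0 utilities (every u_{ij} ∈ {0,1}), each agent gets the same utility in all HZ solutions: if x and y are both HZ solutions of the same assignment problem, then Σ_j u_{ij} x_{ij} = Σ_j u_{ij} y_{ij} for every agent i. -/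
open Finset

/-- Two-point allocation: mass `t` on `jA`, mass `1-t` on `jB`. -/
noncomputable def twoPt (n : ℕ) (jA jB : Fin n) (t : ℝ) : Fin n → ℝ :=
  fun j => (if j = jA then t else 0) + (if j = jB then 1 - t else 0)

lemma twoPt_balanced {n : ℕ} {jA jB : Fin n} {t : ℝ} (h0 : 0 ≤ t) (h1 : t ≤ 1) :
    IsBalancedAlloc n (twoPt n jA jB t) := by
  constructor
  · intro j
    unfold twoPt
    split_ifs <;> constructor <;> linarith
  · unfold twoPt
    rw [Finset.sum_add_distrib]
    simp

lemma twoPt_dot {n : ℕ} (c : Fin n → ℝ) (jA jB : Fin n) (t : ℝ) :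
    ∑ j, c j * twoPt n jA jB t j = c jA * t + c jB * (1 - t) := by
  unfold twoPt
  simp [mul_add, Finset.sum_add_distrib, mul_ite, mul_zero]

lemma util_mem01 {n : ℕ} {u : Fin n → Fin n → ℝ} (hbin : ∀ i j, u i j = 0 ∨ u i j = 1)
    {z : Fin n → ℝ} (hz : IsBalancedAlloc n z) (i : Fin n) :
    0 ≤ util n u i z ∧ util n u i z ≤ 1 := by
  constructor
  · exact Finset.sum_nonneg fun j _ =>
      mul_nonneg (by rcases hbin i j with h | h <;> simp [h]) (hz.1 j).1
  · have h1 : util n u i z ≤ ∑ j, z j := by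
      apply Finset.sum_le_sum
      intro j _
      rcases hbin i j with h | h
      · simpa [h] using (hz.1 j).1
      · simp [h]
    rw [← hz.2]
    exact h1

lemma cost_lb {n : ℕ} {u : Fin n → Fin n → ℝ} (hbin : ∀ i j, u i j = 0 ∨ u i j = 1)
    {p : Fin n → ℝ} {j0 : Fin n} (hj0 : ∀ j, p j0 ≤ p j)
    {js : Fin n → Fin n} (hjs2 : ∀ i j, u i j = 1 → p (js i) ≤ p j)
    {z : Fin n → ℝ} (hz : IsBalancedAlloc n z) (i : Fin n) :
    p j0 + util n u i z * (p (js i) - p j0) ≤ ∑ j, p j * z j := by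
  have key : ∀ j, (p j0 + u i j * (p (js i) - p j0)) * z j ≤ p j * z j := by
    intro j
    apply mul_le_mul_of_nonneg_right _ (hz.1 j).1
    rcases hbin i j with h | h
    · simpa [h] using hj0 j
    · simpa [h] using hjs2 i j h
  calc p j0 + util n u i z * (p (js i) - p j0)
      = ∑ j, (p j0 + u i j * (p (js i) - p j0)) * z j := by
        have : ∑ j, (p j0 + u i j * (p (js i) - p j0)) * z j
            = p j0 * ∑ j, z j + (∑ j, u i j * z j) * (p (js i) - p j0) := by
          rw [Finset.mul_sum, Finset.sum_mul, ← Finset.sum_add_distrib]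
          exact Finset.sum_congr rfl fun j _ => by ring
        rw [this, hz.2]
        unfold util
        ring
    _ ≤ ∑ j, p j * z j := Finset.sum_le_sum fun j _ => key j

lemma sum_cost {n : ℕ} (p : Fin n → ℝ) {z : Fin n → Fin n → ℝ}
    (hcol : ∀ j, ∑ i, z i j = 1) :
    ∑ i, ∑ j, p j * z i j = ∑ j, p j := by
  rw [Finset.sum_comm]
  simp [← Finset.mul_sum, hcol]

lemma cost_eq {n : ℕ} {u : Fin n → Fin n → ℝ} (hbin : ∀ i j, u i j = 0 ∨ u i j = 1)
    {x : Fin n → Fin n → ℝ} {p : Fin n → ℝ} (hxp : IsHZWithPrices n u x p)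
    {j0 : Fin n} (hj0 : ∀ j, p j0 ≤ p j)
    {js : Fin n → Fin n} (hjs1 : ∀ i, u i (js i) = 1)
    (hjs2 : ∀ i j, u i j = 1 → p (js i) ≤ p j) (i : Fin n) :
    ∑ j, p j * x i j = p j0 + util n u i (x i) * (p (js i) - p j0) := by
  obtain ⟨hF, hB, hp, hc⟩ := hxp
  have hxa : IsBalancedAlloc n (x i) := ⟨fun j => hF.1 i j, hB i⟩
  have h01 := util_mem01 hbin hxa i
  have hlb := cost_lb hbin hj0 hjs2 hxa i
  have hu0 : (0:ℝ) ≤ u i j0 := by rcases hbin i j0 with h | h <;> simp [h]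
  have hub : ∑ j, p j * x i j ≤ p (js i) * util n u i (x i) + p j0 * (1 - util n u i (x i)) := by
    have hz := twoPt_balanced (n := n) (jA := js i) (jB := j0) h01.1 h01.2
    have hdot := twoPt_dot (u i) (js i) j0 (util n u i (x i))
    have hu : util n u i (x i) ≤ util n u i (twoPt n (js i) j0 (util n u i (x i))) := by
      have : util n u i (twoPt n (js i) j0 (util n u i (x i)))
          = u i (js i) * util n u i (x i) + u i j0 * (1 - util n u i (x i)) := hdot
      rw [this, hjs1 i]
      nlinarith [mul_nonneg hu0 (by linarith [h01.2] : (0:ℝ) ≤ 1 - util n u i (x i))]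
    have hcle := (hc i).2.2 _ hz hu
    calc ∑ j, p j * x i j ≤ ∑ j, p j * twoPt n (js i) j0 (util n u i (x i)) j := hcle
      _ = p (js i) * util n u i (x i) + p j0 * (1 - util n u i (x i)) := twoPt_dot p _ _ _
  have hr : p (js i) * util n u i (x i) + p j0 * (1 - util n u i (x i))
      = p j0 + util n u i (x i) * (p (js i) - p j0) := by ring
  linarith

lemma cost_slack {n : ℕ} {u : Fin n → Fin n → ℝ} (hbin : ∀ i j, u i j = 0 ∨ u i j = 1)
    {x : Fin n → Fin n → ℝ} {p : Fin n → ℝ} (hxp : IsHZWithPrices n u x p)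
    {j0 : Fin n} (hj0 : ∀ j, p j0 ≤ p j)
    {js : Fin n → Fin n} (hjs1 : ∀ i, u i (js i) = 1)
    (hjs2 : ∀ i j, u i j = 1 → p (js i) ≤ p j) (i : Fin n)
    (hai : util n u i (x i) < 1) :
    util n u i (x i) * (p (js i) - p j0) = 1 - p j0 ∧ 1 < p (js i) ∧ p j0 ≤ 1 := by
  have hce := cost_eq hbin hxp hj0 hjs1 hjs2 i
  obtain ⟨hF, hB, hp, hc⟩ := hxp
  have hxa : IsBalancedAlloc n (x i) := ⟨fun j => hF.1 i j, hB i⟩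
  have h01 := util_mem01 hbin hxa i
  have hu0 : (0:ℝ) ≤ u i j0 := by rcases hbin i j0 with h | h <;> simp [h]
  have hgnn : (0:ℝ) ≤ p (js i) - p j0 := sub_nonneg.2 (hj0 _)
  -- 1 < α
  have hα : 1 < p (js i) := by
    by_contra hcon
    push_neg at hcon
    have hz := twoPt_balanced (n := n) (jA := js i) (jB := j0) zero_le_one (le_refl 1)
    have hcost : ∑ j, p j * twoPt n (js i) j0 1 j ≤ 1 := by
      rw [twoPt_dot]
      simpa using hcon
    have hle := (hc i).2.1 _ hz hcost
    have : util n u i (twoPt n (js i) j0 1) = 1 := by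
      have := twoPt_dot (u i) (js i) j0 1
      unfold util
      rw [this, hjs1 i]
      ring
    rw [this] at hle
    linarith
  have hβ : p j0 ≤ 1 := by
    have hbud := (hc i).1
    have : 0 ≤ util n u i (x i) * (p (js i) - p j0) := mul_nonneg h01.1 hgnn
    linarith
  refine ⟨?_, hα, hβ⟩
  have hub : util n u i (x i) * (p (js i) - p j0) ≤ 1 - p j0 := by
    have hbud := (hc i).1
    linarith
  have hden : (0:ℝ) < p (js i) - p j0 := by linarith
  set t : ℝ := (1 - p j0) / (p (js i) - p j0) with ht
  have ht0 : 0 ≤ t := div_nonneg (by linarith) hden.le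
  have ht1 : t ≤ 1 := (div_le_one hden).2 (by linarith)
  have htmul : t * (p (js i) - p j0) = 1 - p j0 := div_mul_cancel₀ _ hden.ne'
  have hz := twoPt_balanced (n := n) (jA := js i) (jB := j0) ht0 ht1
  have hcost : ∑ j, p j * twoPt n (js i) j0 t j ≤ 1 := by
    rw [twoPt_dot]
    nlinarith
  have hle := (hc i).2.1 _ hz hcost
  have hut : util n u i (twoPt n (js i) j0 t) = t + u i j0 * (1 - t) := by
    have := twoPt_dot (u i) (js i) j0 t
    unfold util
    rw [this, hjs1 i]
    ring
  rw [hut] at hle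
  have hta : t ≤ util n u i (x i) := by nlinarith [mul_nonneg hu0 (by linarith : (0:ℝ) ≤ 1 - t)]
  have hlow : 1 - p j0 ≤ util n u i (x i) * (p (js i) - p j0) := by
    rw [← htmul]
    exact mul_le_mul_of_nonneg_right hta hden.le
  linarith

lemma hz_main {n : ℕ} {u : Fin n → Fin n → ℝ}
    (hbin : ∀ i j, u i j = 0 ∨ u i j = 1) (hrow : ∀ i, ∃ j, 0 < u i j)
    {x y : Fin n → Fin n → ℝ} {p q : Fin n → ℝ}
    (hxp : IsHZWithPrices n u x p) (hyq : IsHZWithPrices n u y q)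
    {i₀ : Fin n} (hlt : util n u i₀ (x i₀) < util n u i₀ (y i₀)) : False := by
  have hne : (univ : Finset (Fin n)).Nonempty := ⟨i₀, mem_univ _⟩
  obtain ⟨j0, -, hj0'⟩ := Finset.exists_min_image univ p hne
  have hj0 : ∀ j, p j0 ≤ p j := fun j => hj0' j (mem_univ j)
  obtain ⟨k0, -, hk0'⟩ := Finset.exists_min_image univ q hne
  have hk0 : ∀ j, q k0 ≤ q j := fun j => hk0' j (mem_univ j)
  -- cheapest desired goods
  have hS : ∀ (r : Fin n → ℝ) (i : Fin n), ∃ jm, u i jm = 1 ∧ ∀ j, u i j = 1 → r jm ≤ r j := by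
    intro r i
    obtain ⟨j, hjpos⟩ := hrow i
    have hj1 : u i j = 1 := by
      rcases hbin i j with h | h
      · rw [h] at hjpos; linarith
      · exact h
    obtain ⟨jm, hm, hmin⟩ := Finset.exists_min_image (univ.filter fun j => u i j = 1) r
      ⟨j, by simp [hj1]⟩
    exact ⟨jm, (mem_filter.1 hm).2, fun j' hj' => hmin j' (by simp [hj'])⟩
  choose js hjs1 hjs2 using hS p
  choose ks hks1 hks2 using hS q
  -- basic facts
  have hxF := hxp.1; have hxB := hxp.2.1; have hxc := hxp.2.2.2
  have hyF := hyq.1; have hyB := hyq.2.1; have hyc := hyq.2.2.2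
  have hxa : ∀ i, IsBalancedAlloc n (x i) := fun i => ⟨fun j => hxF.1 i j, hxB i⟩
  have hya : ∀ i, IsBalancedAlloc n (y i) := fun i => ⟨fun j => hyF.1 i j, hyB i⟩
  have ha01 : ∀ i, 0 ≤ util n u i (x i) ∧ util n u i (x i) ≤ 1 :=
    fun i => util_mem01 hbin (hxa i) i
  have hb01 : ∀ i, 0 ≤ util n u i (y i) ∧ util n u i (y i) ≤ 1 :=
    fun i => util_mem01 hbin (hya i) i
  have hgnn : ∀ i, (0:ℝ) ≤ p (js i) - p j0 := fun i => sub_nonneg.2 (hj0 _)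
  have hhnn : ∀ i, (0:ℝ) ≤ q (ks i) - q k0 := fun i => sub_nonneg.2 (hk0 _)
  -- cost identities
  have hceP : ∀ i, ∑ j, p j * x i j = p j0 + util n u i (x i) * (p (js i) - p j0) :=
    cost_eq hbin hxp hj0 hjs1 hjs2
  have hceQ : ∀ i, ∑ j, q j * y i j = q k0 + util n u i (y i) * (q (ks i) - q k0) :=
    cost_eq hbin hyq hk0 hks1 hks2
  have hP3 : ∀ i, util n u i (x i) * (p (js i) - p j0) ≤ 1 - p j0 := by
    intro i
    have := (hxp.2.2.2 i).1
    have h2 := hceP i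
    linarith
  have hQ3 : ∀ i, util n u i (y i) * (q (ks i) - q k0) ≤ 1 - q k0 := by
    intro i
    have := (hyq.2.2.2 i).1
    have h2 := hceQ i
    linarith
  have hP2 : ∀ i, util n u i (x i) < 1 →
      util n u i (x i) * (p (js i) - p j0) = 1 - p j0 ∧ 1 < p (js i) ∧ p j0 ≤ 1 :=
    fun i h => cost_slack hbin hxp hj0 hjs1 hjs2 i h
  have hQ2 : ∀ i, util n u i (y i) < 1 →
      util n u i (y i) * (q (ks i) - q k0) = 1 - q k0 ∧ 1 < q (ks i) ∧ q k0 ≤ 1 :=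
    fun i h => cost_slack hbin hyq hk0 hks1 hks2 i h
  -- summed market-clearing inequalities
  have hP4 : ∑ i, util n u i (y i) * (p (js i) - p j0)
      ≤ ∑ i, util n u i (x i) * (p (js i) - p j0) := by
    have h1 : ∑ i, (p j0 + util n u i (y i) * (p (js i) - p j0)) ≤
        ∑ i, (p j0 + util n u i (x i) * (p (js i) - p j0)) := by
      calc ∑ i, (p j0 + util n u i (y i) * (p (js i) - p j0))
          ≤ ∑ i, ∑ j, p j * y i j :=
            Finset.sum_le_sum fun i _ => cost_lb hbin hj0 hjs2 (hya i) i
        _ = ∑ j, p j := sum_cost p hyF.2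
        _ = ∑ i, ∑ j, p j * x i j := (sum_cost p hxF.2).symm
        _ = ∑ i, (p j0 + util n u i (x i) * (p (js i) - p j0)) :=
            Finset.sum_congr rfl fun i _ => hceP i
    rw [Finset.sum_add_distrib, Finset.sum_add_distrib] at h1
    linarith
  have hQ4 : ∑ i, util n u i (x i) * (q (ks i) - q k0)
      ≤ ∑ i, util n u i (y i) * (q (ks i) - q k0) := by
    have h1 : ∑ i, (q k0 + util n u i (x i) * (q (ks i) - q k0)) ≤
        ∑ i, (q k0 + util n u i (y i) * (q (ks i) - q k0)) := by
      calc ∑ i, (q k0 + util n u i (x i) * (q (ks i) - q k0))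
          ≤ ∑ i, ∑ j, q j * x i j :=
            Finset.sum_le_sum fun i _ => cost_lb hbin hk0 hks2 (hxa i) i
        _ = ∑ j, q j := sum_cost q hxF.2
        _ = ∑ i, ∑ j, q j * y i j := (sum_cost q hyF.2).symm
        _ = ∑ i, (q k0 + util n u i (y i) * (q (ks i) - q k0)) :=
            Finset.sum_congr rfl fun i _ => hceQ i
    rw [Finset.sum_add_distrib, Finset.sum_add_distrib] at h1
    linarith
  -- i₀ slack facts
  have ha0lt : util n u i₀ (x i₀) < 1 := lt_of_lt_of_le hlt (hb01 i₀).2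
  obtain ⟨hs0, hα0, hβle⟩ := hP2 i₀ ha0lt
  have hg0pos : 0 < p (js i₀) - p j0 := by linarith
  -- the set where y beats x under... get i₁ with b < a
  have hBex : ∃ i₁, util n u i₁ (y i₁) < util n u i₁ (x i₁) := by
    by_contra hno
    push_neg at hno
    have hstrict : ∑ i, util n u i (x i) * (p (js i) - p j0)
        < ∑ i, util n u i (y i) * (p (js i) - p j0) :=
      Finset.sum_lt_sum (fun i _ => mul_le_mul_of_nonneg_right (hno i) (hgnn i))
        ⟨i₀, mem_univ _, mul_lt_mul_of_pos_right hlt hg0pos⟩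
    linarith
  obtain ⟨i₁, hlt1⟩ := hBex
  have hb1lt : util n u i₁ (y i₁) < 1 := lt_of_lt_of_le hlt1 (ha01 i₁).2
  obtain ⟨hs1, hα1, hβ'le⟩ := hQ2 i₁ hb1lt
  have hh1pos : 0 < q (ks i₁) - q k0 := by linarith
  rcases eq_or_lt_of_le hβle with hβ1 | hβlt
  · -- degenerate case p j0 = 1
    have hterm : ∀ i ∈ univ, util n u i (x i) * (p (js i) - p j0)
        ≤ util n u i (y i) * (p (js i) - p j0) := by
      intro i _
      rcases lt_trichotomy (util n u i (x i)) (util n u i (y i)) with h | h | h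
      · have hx1 : util n u i (x i) < 1 := lt_of_lt_of_le h (hb01 i).2
        obtain ⟨hseq, -, -⟩ := hP2 i hx1
        rw [hseq]
        have := mul_nonneg (hb01 i).1 (hgnn i)
        linarith
      · rw [h]
      · have hapos : 0 < util n u i (x i) := lt_of_le_of_lt (hb01 i).1 h
        have hg0 : p (js i) - p j0 ≤ 0 := by nlinarith [hP3 i]
        have hgz : p (js i) - p j0 = 0 := le_antisymm hg0 (hgnn i)
        rw [hgz]
        simp
    have hb0pos : 0 < util n u i₀ (y i₀) := lt_of_le_of_lt (ha01 i₀).1 hlt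
    have hstrict : ∑ i, util n u i (x i) * (p (js i) - p j0)
        < ∑ i, util n u i (y i) * (p (js i) - p j0) :=
      Finset.sum_lt_sum hterm ⟨i₀, mem_univ _, by
        rw [hs0]
        have := mul_pos hb0pos hg0pos
        linarith⟩
    linarith
  rcases eq_or_lt_of_le hβ'le with hβ'1 | hβ'lt
  · -- degenerate case q k0 = 1
    have hterm : ∀ i ∈ univ, util n u i (y i) * (q (ks i) - q k0)
        ≤ util n u i (x i) * (q (ks i) - q k0) := by
      intro i _
      rcases lt_trichotomy (util n u i (y i)) (util n u i (x i)) with h | h | h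
      · have hy1 : util n u i (y i) < 1 := lt_of_lt_of_le h (ha01 i).2
        obtain ⟨hseq, -, -⟩ := hQ2 i hy1
        rw [hseq]
        have := mul_nonneg (ha01 i).1 (hhnn i)
        linarith
      · rw [h]
      · have hbpos : 0 < util n u i (y i) := lt_of_le_of_lt (ha01 i).1 h
        have hh0 : q (ks i) - q k0 ≤ 0 := by nlinarith [hQ3 i]
        have hhz : q (ks i) - q k0 = 0 := le_antisymm hh0 (hhnn i)
        rw [hhz]
        simp
    have ha1pos : 0 < util n u i₁ (x i₁) := lt_of_le_of_lt (hb01 i₁).1 hlt1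
    have hstrict : ∑ i, util n u i (y i) * (q (ks i) - q k0)
        < ∑ i, util n u i (x i) * (q (ks i) - q k0) :=
      Finset.sum_lt_sum hterm ⟨i₁, mem_univ _, by
        rw [hs1]
        have := mul_pos ha1pos hh1pos
        linarith⟩
    linarith
  -- main case: p j0 < 1 and q k0 < 1
  have hAa : ∀ i, util n u i (x i) < util n u i (y i) → 0 < util n u i (x i) := by
    intro i h
    have hx1 : util n u i (x i) < 1 := lt_of_lt_of_le h (hb01 i).2
    obtain ⟨hseq, -, -⟩ := hP2 i hx1
    nlinarith [hgnn i]
  have hBb : ∀ i, util n u i (y i) < util n u i (x i) → 0 < util n u i (y i) := by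
    intro i h
    have hy1 : util n u i (y i) < 1 := lt_of_lt_of_le h (ha01 i).2
    obtain ⟨hseq, -, -⟩ := hQ2 i hy1
    nlinarith [hhnn i]
  -- p-side termwise bound
  have hF : ∀ i, (1 - p j0) * (if util n u i (x i) = util n u i (y i) then (0:ℝ)
        else (util n u i (y i) - util n u i (x i)) / util n u i (x i))
      ≤ (util n u i (y i) - util n u i (x i)) * (p (js i) - p j0) := by
    intro i
    by_cases hab : util n u i (x i) = util n u i (y i)
    · rw [if_pos hab, hab]
      simp
    · rw [if_neg hab]
      rcases lt_or_gt_of_ne hab with h | h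
      · have hapos := hAa i h
        have hx1 : util n u i (x i) < 1 := lt_of_lt_of_le h (hb01 i).2
        obtain ⟨hseq, -, -⟩ := hP2 i hx1
        have hg : p (js i) - p j0 = (1 - p j0) / util n u i (x i) := by
          rw [eq_div_iff hapos.ne']
          linarith [hseq, mul_comm (util n u i (x i)) (p (js i) - p j0)]
        rw [hg]
        exact le_of_eq (by ring)
      · have hapos : 0 < util n u i (x i) := lt_of_le_of_lt (hb01 i).1 h
        have hgle : p (js i) - p j0 ≤ (1 - p j0) / util n u i (x i) := by
          rw [le_div_iff₀ hapos]
          nlinarith [hP3 i]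
        calc (1 - p j0) * ((util n u i (y i) - util n u i (x i)) / util n u i (x i))
            = (util n u i (y i) - util n u i (x i)) * ((1 - p j0) / util n u i (x i)) := by
              ring
          _ ≤ (util n u i (y i) - util n u i (x i)) * (p (js i) - p j0) :=
              mul_le_mul_of_nonpos_left hgle (by linarith)
  -- q-side termwise bound
  have hG : ∀ i, (1 - q k0) * (if util n u i (x i) = util n u i (y i) then (0:ℝ)
        else (util n u i (x i) - util n u i (y i)) / util n u i (y i))
      ≤ (util n u i (x i) - util n u i (y i)) * (q (ks i) - q k0) := by
    intro i
    by_cases hab : util n u i (x i) = util n u i (y i)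
    · rw [if_pos hab, hab]
      simp
    · rw [if_neg hab]
      rcases lt_or_gt_of_ne hab with h | h
      · -- a < b : here b - a > 0 so for the q-side this is the "flip" case
        have hbpos : 0 < util n u i (y i) := lt_of_le_of_lt (ha01 i).1 h
        have hhle : q (ks i) - q k0 ≤ (1 - q k0) / util n u i (y i) := by
          rw [le_div_iff₀ hbpos]
          nlinarith [hQ3 i]
        calc (1 - q k0) * ((util n u i (x i) - util n u i (y i)) / util n u i (y i))
            = (util n u i (x i) - util n u i (y i)) * ((1 - q k0) / util n u i (y i)) := by
              ring
          _ ≤ (util n u i (x i) - util n u i (y i)) * (q (ks i) - q k0) :=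
              mul_le_mul_of_nonpos_left hhle (by linarith)
      · have hbpos := hBb i h
        have hy1 : util n u i (y i) < 1 := lt_of_lt_of_le h (ha01 i).2
        obtain ⟨hseq, -, -⟩ := hQ2 i hy1
        have hh : q (ks i) - q k0 = (1 - q k0) / util n u i (y i) := by
          rw [eq_div_iff hbpos.ne']
          linarith [hseq, mul_comm (util n u i (y i)) (q (ks i) - q k0)]
        rw [hh]
        exact le_of_eq (by ring)
  -- summed versions
  have hC1 : ∑ i, (if util n u i (x i) = util n u i (y i) then (0:ℝ)
        else (util n u i (y i) - util n u i (x i)) / util n u i (x i)) ≤ 0 := by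
    have hsum := Finset.sum_le_sum (fun i (_ : i ∈ univ) => hF i)
    rw [← Finset.mul_sum] at hsum
    have hsum2 : ∑ i, (util n u i (y i) - util n u i (x i)) * (p (js i) - p j0) ≤ 0 := by
      have hdist : ∑ i, (util n u i (y i) - util n u i (x i)) * (p (js i) - p j0)
          = ∑ i, util n u i (y i) * (p (js i) - p j0)
            - ∑ i, util n u i (x i) * (p (js i) - p j0) := by
        rw [← Finset.sum_sub_distrib]
        exact Finset.sum_congr rfl fun i _ => by ring
      rw [hdist]
      linarith
    nlinarith [hsum, hsum2]
  have hC2 : ∑ i, (if util n u i (x i) = util n u i (y i) then (0:ℝ)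
        else (util n u i (x i) - util n u i (y i)) / util n u i (y i)) ≤ 0 := by
    have hsum := Finset.sum_le_sum (fun i (_ : i ∈ univ) => hG i)
    rw [← Finset.mul_sum] at hsum
    have hsum2 : ∑ i, (util n u i (x i) - util n u i (y i)) * (q (ks i) - q k0) ≤ 0 := by
      have hdist : ∑ i, (util n u i (x i) - util n u i (y i)) * (q (ks i) - q k0)
          = ∑ i, util n u i (x i) * (q (ks i) - q k0)
            - ∑ i, util n u i (y i) * (q (ks i) - q k0) := by
        rw [← Finset.sum_sub_distrib]
        exact Finset.sum_congr rfl fun i _ => by ring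
      rw [hdist]
      linarith
    nlinarith [hsum, hsum2]
  -- strict termwise comparison
  have hterm : ∀ i, -(if util n u i (x i) = util n u i (y i) then (0:ℝ)
        else (util n u i (x i) - util n u i (y i)) / util n u i (y i))
      ≤ (if util n u i (x i) = util n u i (y i) then (0:ℝ)
        else (util n u i (y i) - util n u i (x i)) / util n u i (x i)) ∧
      (util n u i (x i) ≠ util n u i (y i) →
      -(if util n u i (x i) = util n u i (y i) then (0:ℝ)
        else (util n u i (x i) - util n u i (y i)) / util n u i (y i))
      < (if util n u i (x i) = util n u i (y i) then (0:ℝ)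
        else (util n u i (y i) - util n u i (x i)) / util n u i (x i))) := by
    intro i
    by_cases hab : util n u i (x i) = util n u i (y i)
    · simp only [if_pos hab]
      exact ⟨by simp, fun hne => absurd hab hne⟩
    · simp only [if_neg hab]
      have hkey : (util n u i (y i) - util n u i (x i)) / util n u i (y i)
          < (util n u i (y i) - util n u i (x i)) / util n u i (x i) := by
        rcases lt_or_gt_of_ne hab with h | h
        · have hapos := hAa i h
          have hbpos : 0 < util n u i (y i) := lt_of_le_of_lt (ha01 i).1 h
          rw [div_lt_div_iff₀ hbpos hapos]
          exact mul_lt_mul_of_pos_left h (by linarith)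
        · have hbpos := hBb i h
          have hapos : 0 < util n u i (x i) := lt_of_le_of_lt (hb01 i).1 h
          rw [div_lt_div_iff₀ hbpos hapos]
          exact mul_lt_mul_of_neg_left h (by linarith)
      have hneg : -((util n u i (x i) - util n u i (y i)) / util n u i (y i))
          = (util n u i (y i) - util n u i (x i)) / util n u i (y i) := by ring
      rw [hneg]
      exact ⟨le_of_lt hkey, fun _ => hkey⟩
  have hC3 : ∑ i, -(if util n u i (x i) = util n u i (y i) then (0:ℝ)
        else (util n u i (x i) - util n u i (y i)) / util n u i (y i))
      < ∑ i, (if util n u i (x i) = util n u i (y i) then (0:ℝ)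
        else (util n u i (y i) - util n u i (x i)) / util n u i (x i)) :=
    Finset.sum_lt_sum (fun i _ => (hterm i).1)
      ⟨i₀, mem_univ _, (hterm i₀).2 (ne_of_lt hlt)⟩
  rw [Finset.sum_neg_distrib] at hC3
  linarith

/-- Under 1-0 utilities, each agent gets the same utility in all
HZ solutions. -/
theorem hz_unique_utilities_of_binary (n : ℕ) (u : Fin n → Fin n → ℝ)
    (hbin : ∀ i j, u i j = 0 ∨ u i j = 1)
    (hrow : ∀ i, ∃ j, 0 < u i j) (hcol : ∀ j, ∃ i, 0 < u i j)
    (x y : Fin n → Fin n → ℝ)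
    (hx : IsHZ n u x) (hy : IsHZ n u y) :
    ∀ i, util n u i (x i) = util n u i (y i) := by
  intro i
  obtain ⟨p, hxp⟩ := hx
  obtain ⟨q, hyq⟩ := hy
  by_contra hne2
  rcases lt_or_gt_of_ne hne2 with h | h
  · exact hz_main hbin hrow hxp hyq h
  · exact hz_main hbin hrow hyq hxp h
end

section
/- Let u be bi-valued utilities in which each agent i values at least one item at α_i, and let u' be the binary-reduced utilities of u. Then a balanced fractional assignment x is an HZ solution of the instance with utilities u if and only if x is an HZ solution of the instance with utilities u'; moreover, any price vector p supporting x as an HZ solution for u also supports x as an HZ solution for u'. -/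
open Finset

/-- Utilities `u` are bi-valued with values `α i > β i ≥ 0` for each agent `i`. -/
def BiValued (n : ℕ) (u : Fin n → Fin n → ℝ) (α β : Fin n → ℝ) : Prop :=
  ∀ i, 0 ≤ β i ∧ β i < α i ∧ ∀ j, u i j = α i ∨ u i j = β i

/-- For bi-valued utilities `u` (each agent valuing some item at `α i`)
with binary reduction `u'`, a balanced fractional assignment is an HZ solution for
`u` iff it is an HZ solution for `u'`; moreover any price vector supporting it as
an HZ solution for `u` also supports it for `u'`. -/
theorem hz_bivalued_iff_hz_binary_reduced (n : ℕ) (u : Fin n → Fin n → ℝ)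
    (α β : Fin n → ℝ) (hbi : BiValued n u α β)
    (htop : ∀ i, ∃ j, u i j = α i)
    (u' : Fin n → Fin n → ℝ)
    (hu' : ∀ i j, u' i j = if u i j = α i then 1 else 0)
    (x : Fin n → Fin n → ℝ) :
    (IsHZ n u x ↔ IsHZ n u' x) ∧
    (∀ p, IsHZWithPrices n u x p → IsHZWithPrices n u' x p) := by
  have key : ∀ (i : Fin n) (y : Fin n → ℝ),
      util n u i y = β i * (∑ j, y j) + (α i - β i) * util n u' i y := by
    intro i y
    obtain ⟨hβ0, hβα, hval⟩ := hbi i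
    simp only [util, Finset.mul_sum, ← Finset.sum_add_distrib]
    refine Finset.sum_congr rfl fun j _ => ?_
    rcases hval j with h | h
    · rw [h, hu', if_pos h]; ring
    · have hne : u i j ≠ α i := by rw [h]; exact ne_of_lt hβα
      rw [h, hu', if_neg hne]; ring
  have mono : ∀ (i : Fin n) (y z : Fin n → ℝ), (∑ j, y j) = 1 → (∑ j, z j) = 1 →
      (util n u i y ≤ util n u i z ↔ util n u' i y ≤ util n u' i z) := by
    intro i y z hy hz
    have hd : 0 < α i - β i := sub_pos.2 (hbi i).2.1
    rw [key i y, key i z, hy, hz]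
    constructor
    · intro h; nlinarith
    · intro h; nlinarith
  have main : ∀ p, IsHZWithPrices n u x p ↔ IsHZWithPrices n u' x p := by
    intro p
    constructor
    · rintro ⟨hfa, hbal, hp, hcond⟩
      refine ⟨hfa, hbal, hp, fun i => ?_⟩
      obtain ⟨h1, h2, h3⟩ := hcond i
      refine ⟨h1, fun y hy hpy => ?_, fun y hy huy => ?_⟩
      · exact (mono i y (x i) hy.2 (hbal i)).1 (h2 y hy hpy)
      · exact h3 y hy ((mono i (x i) y (hbal i) hy.2).2 huy)
    · rintro ⟨hfa, hbal, hp, hcond⟩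
      refine ⟨hfa, hbal, hp, fun i => ?_⟩
      obtain ⟨h1, h2, h3⟩ := hcond i
      refine ⟨h1, fun y hy hpy => ?_, fun y hy huy => ?_⟩
      · exact (mono i y (x i) hy.2 (hbal i)).2 (h2 y hy hpy)
      · exact h3 y hy ((mono i (x i) y (hbal i) hy.2).1 huy)
  exact ⟨⟨fun ⟨p, hp⟩ => ⟨p, (main p).1 hp⟩, fun ⟨p, hp⟩ => ⟨p, (main p).2 hp⟩⟩,
    fun p hp => (main p).1 hp⟩
end
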